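/- arXiv:1011.2145 — 7 statements merged into one kernel-verified Lean document; each statement's English description precedes it below -/
import Mathlib

section
/- Let η : ℝ² → ℝ be a smooth, nowhere vanishing function of (u,w) satisfying at every point the two identities η·η_uw = η_u·η_w and η·η_ww = η_w². Then there exist a smooth nowhere vanishing function A : ℝ → ℝ and a constant c ∈ ℝ such that η(u,w) = A(u)·e^{c·w} for all (u,w) ∈ ℝ². -/
/-- Partial derivative in the first (u) coordinate of a function on ℝ² = ℝ × ℝ. -/
noncomputable def pu (f : ℝ × ℝ → ℝ) : ℝ × ℝ → ℝ :=
  fun p => deriv (fun s => f (s, p.2)) p.1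

/-- Partial derivative in the second (w) coordinate. -/
noncomputable def pw (f : ℝ × ℝ → ℝ) : ℝ × ℝ → ℝ :=
  fun p => deriv (fun s => f (p.1, s)) p.2

lemma slice1_hasDerivAt {f : ℝ × ℝ → ℝ} (hf : Differentiable ℝ f) (p : ℝ × ℝ) :
    HasDerivAt (fun s => f (s, p.2)) (fderiv ℝ f p (1, 0)) p.1 :=
  (hf p).hasFDerivAt.comp_hasDerivAt p.1
    ((hasDerivAt_id p.1).prodMk (hasDerivAt_const p.1 p.2))

lemma slice2_hasDerivAt {f : ℝ × ℝ → ℝ} (hf : Differentiable ℝ f) (p : ℝ × ℝ) :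
    HasDerivAt (fun s => f (p.1, s)) (fderiv ℝ f p (0, 1)) p.2 :=
  (hf p).hasFDerivAt.comp_hasDerivAt p.2
    ((hasDerivAt_const p.2 p.1).prodMk (hasDerivAt_id p.2))

lemma pu_eq {f : ℝ × ℝ → ℝ} (hf : Differentiable ℝ f) (p : ℝ × ℝ) :
    pu f p = fderiv ℝ f p (1, 0) :=
  (slice1_hasDerivAt hf p).deriv

lemma pw_eq {f : ℝ × ℝ → ℝ} (hf : Differentiable ℝ f) (p : ℝ × ℝ) :
    pw f p = fderiv ℝ f p (0, 1) :=
  (slice2_hasDerivAt hf p).deriv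

lemma pu_smooth {f : ℝ × ℝ → ℝ} (hf : ContDiff ℝ (⊤ : ℕ∞) f) : ContDiff ℝ (⊤ : ℕ∞) (pu f) := by
  have : pu f = fun p => fderiv ℝ f p (1, 0) :=
    funext (pu_eq (hf.differentiable (by simp)))
  rw [this]
  exact (hf.fderiv_right (by simp)).clm_apply contDiff_const

lemma pw_smooth {f : ℝ × ℝ → ℝ} (hf : ContDiff ℝ (⊤ : ℕ∞) f) : ContDiff ℝ (⊤ : ℕ∞) (pw f) := by
  have : pw f = fun p => fderiv ℝ f p (0, 1) :=
    funext (pw_eq (hf.differentiable (by simp)))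
  rw [this]
  exact (hf.fderiv_right (by simp)).clm_apply contDiff_const

lemma mixed_eq {f : ℝ × ℝ → ℝ} (hf : ContDiff ℝ (⊤ : ℕ∞) f) (p : ℝ × ℝ) :
    pu (pw f) p = pw (pu f) p := by
  have hd : Differentiable ℝ f := hf.differentiable (by simp)
  have hd' : Differentiable ℝ (fderiv ℝ f) :=
    (hf.fderiv_right (m := (⊤ : ℕ∞)) (by simp)).differentiable (by simp)
  have hsym := second_derivative_symmetric (f := f) (f' := fderiv ℝ f)
    (f'' := fderiv ℝ (fderiv ℝ f) p) (fun y => (hd y).hasFDerivAt)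
    (hd' p).hasFDerivAt
  have e1 : pu (pw f) p = fderiv ℝ (fderiv ℝ f) p (1, 0) (0, 1) := by
    rw [pu_eq ((pw_smooth hf).differentiable (by simp))]
    have hpw : pw f = fun q => fderiv ℝ f q ((0 : ℝ), (1 : ℝ)) := funext (pw_eq hd)
    have hL : HasFDerivAt (fun q => fderiv ℝ f q ((0 : ℝ), (1 : ℝ)))
        ((ContinuousLinearMap.apply ℝ ℝ ((0 : ℝ), (1 : ℝ))).comp
          (fderiv ℝ (fderiv ℝ f) p)) p :=
      (ContinuousLinearMap.apply ℝ ℝ ((0 : ℝ), (1 : ℝ))).hasFDerivAt.comp p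
        (hd' p).hasFDerivAt
    rw [hpw, hL.fderiv]
    rfl
  have e2 : pw (pu f) p = fderiv ℝ (fderiv ℝ f) p (0, 1) (1, 0) := by
    rw [pw_eq ((pu_smooth hf).differentiable (by simp))]
    have hpu : pu f = fun q => fderiv ℝ f q ((1 : ℝ), (0 : ℝ)) := funext (pu_eq hd)
    have hL : HasFDerivAt (fun q => fderiv ℝ f q ((1 : ℝ), (0 : ℝ)))
        ((ContinuousLinearMap.apply ℝ ℝ ((1 : ℝ), (0 : ℝ))).comp
          (fderiv ℝ (fderiv ℝ f) p)) p :=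
      (ContinuousLinearMap.apply ℝ ℝ ((1 : ℝ), (0 : ℝ))).hasFDerivAt.comp p
        (hd' p).hasFDerivAt
    rw [hpu, hL.fderiv]
    rfl
  rw [e1, e2, hsym]

/-- If a smooth nowhere-vanishing η(u,w) satisfies η·η_uw = η_u·η_w and η·η_ww = η_w²,
then η(u,w) = A(u)·e^{c·w} for some smooth nowhere-vanishing A and constant c. -/
theorem statement1
    (η : ℝ × ℝ → ℝ) (hη : ContDiff ℝ (⊤ : ℕ∞) η) (hne : ∀ p : ℝ × ℝ, η p ≠ 0)
    (h1 : ∀ p : ℝ × ℝ, η p * pw (pu η) p = pu η p * pw η p)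
    (h2 : ∀ p : ℝ × ℝ, η p * pw (pw η) p = (pw η p) ^ 2) :
    ∃ (A : ℝ → ℝ) (c : ℝ), ContDiff ℝ (⊤ : ℕ∞) A ∧ (∀ x : ℝ, A x ≠ 0) ∧
      ∀ p : ℝ × ℝ, η p = A p.1 * Real.exp (c * p.2) := by
  have hd : Differentiable ℝ η := hη.differentiable (by simp)
  have hpwd : Differentiable ℝ (pw η) := (pw_smooth hη).differentiable (by simp)
  set c : ℝ := pw η (0, 0) / η (0, 0) with hc
  -- the quotient g = pw η / η
  set g : ℝ × ℝ → ℝ := fun p => pw η p / η p with hg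
  -- slice differentiability
  have hslice2 : ∀ (u : ℝ), Differentiable ℝ (fun s => η (u, s)) := fun u =>
    fun s => ((slice2_hasDerivAt hd (u, s)).differentiableAt)
  have hslice2' : ∀ (u : ℝ), Differentiable ℝ (fun s => pw η (u, s)) := fun u =>
    fun s => ((slice2_hasDerivAt hpwd (u, s)).differentiableAt)
  have hslice1 : Differentiable ℝ (fun t => η (t, 0)) :=
    fun t => ((slice1_hasDerivAt hd (t, 0)).differentiableAt)
  have hslice1' : Differentiable ℝ (fun t => pw η (t, 0)) :=
    fun t => ((slice1_hasDerivAt hpwd (t, 0)).differentiableAt)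
  -- pw η of a slice as a HasDerivAt statement
  have hD2 : ∀ p : ℝ × ℝ, HasDerivAt (fun s => η (p.1, s)) (pw η p) p.2 := by
    intro p
    have := (hslice2 p.1 p.2).hasDerivAt
    exact this
  have hD2' : ∀ p : ℝ × ℝ, HasDerivAt (fun s => pw η (p.1, s)) (pw (pw η) p) p.2 := by
    intro p
    exact (hslice2' p.1 p.2).hasDerivAt
  have hD1 : ∀ t : ℝ, HasDerivAt (fun t => η (t, 0)) (pu η (t, 0)) t := by
    intro t
    exact (hslice1 t).hasDerivAt
  have hD1' : ∀ t : ℝ, HasDerivAt (fun t => pw η (t, 0)) (pu (pw η) (t, 0)) t := by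
    intro t
    exact (hslice1' t).hasDerivAt
  -- g is constant in the second variable
  have gconst2 : ∀ (u w : ℝ), g (u, w) = g (u, 0) := by
    intro u w
    have hdiff : Differentiable ℝ (fun s => g (u, s)) := by
      intro s
      exact ((hslice2' u s).div (hslice2 u s) (hne (u, s)))
    have hderiv : ∀ s, deriv (fun s => g (u, s)) s = 0 := by
      intro s
      have h := (hD2' (u, s)).div (hD2 (u, s)) (hne (u, s))
      rw [show deriv (fun s => g (u, s)) s = _ from h.deriv]
      show (pw (pw η) (u, s) * η (u, s) - pw η (u, s) * pw η (u, s)) / η (u, s) ^ 2 = 0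
      have hnum : pw (pw η) (u, s) * η (u, s) - pw η (u, s) * pw η (u, s) = 0 := by
        linear_combination h2 (u, s)
      rw [hnum, zero_div]
    exact is_const_of_deriv_eq_zero hdiff hderiv w 0
  -- g(·,0) is constant
  have gconst1 : ∀ u : ℝ, g (u, 0) = g (0, 0) := by
    intro u
    have hdiff : Differentiable ℝ (fun t => g (t, 0)) := by
      intro t
      exact ((hslice1' t).div (hslice1 t) (hne (t, 0)))
    have hderiv : ∀ t, deriv (fun t => g (t, 0)) t = 0 := by
      intro t
      have h := (hD1' t).div (hD1 t) (hne (t, 0))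
      rw [show deriv (fun t => g (t, 0)) t = _ from h.deriv]
      show (pu (pw η) (t, 0) * η (t, 0) - pw η (t, 0) * pu η (t, 0)) / η (t, 0) ^ 2 = 0
      rw [mixed_eq hη (t, 0)]
      have hnum : pw (pu η) (t, 0) * η (t, 0) - pw η (t, 0) * pu η (t, 0) = 0 := by
        linear_combination h1 (t, 0)
      rw [hnum, zero_div]
    exact is_const_of_deriv_eq_zero hdiff hderiv u 0
  -- hence pw η = c * η everywhere
  have key : ∀ p : ℝ × ℝ, pw η p = c * η p := by
    intro p
    have : g p = c := by
      have := (gconst2 p.1 p.2).trans (gconst1 p.1)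
      simpa [hg, hc] using this
    have h' : pw η p / η p = c := this
    exact (div_eq_iff (hne p)).mp h'
  refine ⟨fun u => η (u, 0), c, ?_, fun u => hne (u, 0), ?_⟩
  · exact hη.comp (contDiff_id.prodMk contDiff_const)
  · rintro ⟨u, w⟩
    have hF : ∀ s : ℝ, HasDerivAt (fun s => η (u, s) * Real.exp (-(c * s)))
        (0 : ℝ) s := by
      intro s
      have he : HasDerivAt (fun s : ℝ => Real.exp (-(c * s)))
          (Real.exp (-(c * s)) * (-c)) s := by
        have : HasDerivAt (fun s : ℝ => -(c * s)) (-c) s := by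
          exact ((hasDerivAt_id' s).const_mul c).neg.congr_deriv (by ring)
        simpa using this.exp
      have h := (hD2 (u, s)).mul he
      have : pw η (u, s) * Real.exp (-(c * s)) +
          η (u, s) * (Real.exp (-(c * s)) * (-c)) = 0 := by
        rw [key (u, s)]; ring
      rwa [this] at h
    have hcst := is_const_of_deriv_eq_zero
      (fun s => (hF s).differentiableAt) (fun s => (hF s).deriv) w 0
    simp only [mul_zero, neg_zero, Real.exp_zero, mul_one] at hcst
    have hexp : Real.exp (-(c * w)) ≠ 0 := Real.exp_ne_zero _
    have hcw : Real.exp (-(c * w)) * Real.exp (c * w) = 1 := by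
      rw [← Real.exp_add]; simp
    calc η (u, w) = η (u, w) * (Real.exp (-(c * w)) * Real.exp (c * w)) := by
          rw [hcw, mul_one]
      _ = (η (u, w) * Real.exp (-(c * w))) * Real.exp (c * w) := by ring
      _ = η (u, 0) * Real.exp (c * w) := by rw [hcst]
end

section
/- Let φ, ψ : ℝ² → ℝ be smooth functions of (u,w) and set η ≡ 1. Then the triple (φ, ψ, η) satisfies the integrability conditions if and only if there exist constants α, β ∈ ℝ and smooth functions f, g : ℝ → ℝ such that ψ(u,w) = α·w + f(u), φ(u,w) = β·w + g(u), and f'' = α(f' − β), g'' = 2α·g' − β·f' − β² hold identically on ℝ. -/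
/-- The nine integrability conditions for a triple (φ, ψ, η) of functions of (u, w),
holding at every point of the set `S`. -/
def IntCond (φ ψ η : ℝ × ℝ → ℝ) (S : Set (ℝ × ℝ)) : Prop :=
  ∀ p ∈ S,
    η p * pu (pu φ) p = -((pw φ p) ^ 2 + pu ψ p * pw φ p - 2 * pw ψ p * pu φ p) ∧
    η p * pw (pu φ) p = pw η p * pu φ p ∧
    η p * pw (pw φ) p = pw η p * pw φ p ∧
    η p * pu (pu ψ) p =
      -(pw φ p) * pw ψ p + pu ψ p * pw ψ p - 2 * pw φ p * pu η p + 2 * pw η p * pu φ p ∧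
    η p * pw (pu ψ) p = pw η p * pu ψ p ∧
    η p * pw (pw ψ) p = pw η p * pw ψ p ∧
    η p * pu (pu η) p = -(pw η p) * (pw φ p - pu ψ p) ∧
    η p * pw (pu η) p = pw η p * pu η p ∧
    η p * pw (pw η) p = (pw η p) ^ 2

lemma pu_closed (c : ℝ) (g : ℝ → ℝ) (p : ℝ × ℝ) :
    pu (fun q => c * q.2 + g q.1) p = deriv g p.1 := by
  simp [pu]

lemma pw_closed (c : ℝ) (g : ℝ → ℝ) (p : ℝ × ℝ) :
    pw (fun q => c * q.2 + g q.1) p = c := by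
  simp only [pw]
  rw [deriv_add_const]
  simpa using ((hasDerivAt_id p.2).const_mul c).deriv

lemma pu_pu_closed (c : ℝ) (g : ℝ → ℝ) (p : ℝ × ℝ) :
    pu (pu (fun q => c * q.2 + g q.1)) p = deriv (deriv g) p.1 := by
  have h : (fun s => pu (fun q => c * q.2 + g q.1) (s, p.2)) = deriv g := by
    funext s; simp [pu]
  simp only [pu] at h ⊢
  rw [h]

lemma pw_pu_closed (c : ℝ) (g : ℝ → ℝ) (p : ℝ × ℝ) :
    pw (pu (fun q => c * q.2 + g q.1)) p = 0 := by
  have h : (fun s => pu (fun q => c * q.2 + g q.1) (p.1, s)) = fun _ => deriv g p.1 := by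
    funext s; simp [pu]
  simp only [pw, pu] at h ⊢
  rw [h, deriv_const]

lemma pw_pw_closed (c : ℝ) (g : ℝ → ℝ) (p : ℝ × ℝ) :
    pw (pw (fun q => c * q.2 + g q.1)) p = 0 := by
  simp only [pw]
  have h2 : (fun s => deriv (fun t : ℝ => c * t + g p.1) s) = fun _ : ℝ => c := by
    funext s; rw [deriv_add_const]
    simpa using ((hasDerivAt_id s).const_mul c).deriv
  rw [h2, deriv_const]

lemma pu_one (p : ℝ × ℝ) : pu (fun _ => (1:ℝ)) p = 0 := by simp [pu]
lemma pw_one (p : ℝ × ℝ) : pw (fun _ => (1:ℝ)) p = 0 := by simp [pw]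
lemma pu_pu_one (p : ℝ × ℝ) : pu (pu (fun _ => (1:ℝ))) p = 0 := by simp [pu]
lemma pw_pu_one (p : ℝ × ℝ) : pw (pu (fun _ => (1:ℝ))) p = 0 := by simp [pw, pu]
lemma pw_pw_one (p : ℝ × ℝ) : pw (pw (fun _ => (1:ℝ))) p = 0 := by simp [pw]
lemma pw_eq_fderiv (G : ℝ × ℝ → ℝ) (hG : Differentiable ℝ G) (p : ℝ × ℝ) :
    pw G p = fderiv ℝ G p (0, 1) := by
  have hl : HasDerivAt (fun s : ℝ => (p.1, s)) ((0:ℝ), (1:ℝ)) p.2 :=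
    HasDerivAt.prodMk (hasDerivAt_const _ _) (hasDerivAt_id _)
  have h := ((hG (p.1, p.2)).hasFDerivAt.comp_hasDerivAt p.2 hl).deriv
  simpa [pw, Function.comp_def] using h

lemma pu_eq_fderiv (G : ℝ × ℝ → ℝ) (hG : Differentiable ℝ G) (p : ℝ × ℝ) :
    pu G p = fderiv ℝ G p (1, 0) := by
  have hl : HasDerivAt (fun s : ℝ => (s, p.2)) ((1:ℝ), (0:ℝ)) p.1 :=
    HasDerivAt.prodMk (hasDerivAt_id _) (hasDerivAt_const _ _)
  have h := ((hG (p.1, p.2)).hasFDerivAt.comp_hasDerivAt p.1 hl).deriv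
  simpa [pu, Function.comp_def] using h

lemma master (G : ℝ × ℝ → ℝ) (hG : ContDiff ℝ (⊤ : ℕ∞) G)
    (h3 : ∀ p, pw (pw G) p = 0) (h2 : ∀ p, pw (pu G) p = 0) :
    ∃ (c : ℝ) (g : ℝ → ℝ), ContDiff ℝ (⊤ : ℕ∞) g ∧ ∀ p : ℝ × ℝ, G p = c * p.2 + g p.1 := by
  have hGd : Differentiable ℝ G := hG.differentiable (by simp)
  set Pw : ℝ × ℝ → ℝ := fun p => fderiv ℝ G p (0, 1) with hPwdef
  set Pu : ℝ × ℝ → ℝ := fun p => fderiv ℝ G p (1, 0) with hPudef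
  have hPwsm : ContDiff ℝ (⊤ : ℕ∞) Pw := (hG.fderiv_right (by simp)).clm_apply contDiff_const
  have hPusm : ContDiff ℝ (⊤ : ℕ∞) Pu := (hG.fderiv_right (by simp)).clm_apply contDiff_const
  have hpwe : pw G = Pw := funext fun p => pw_eq_fderiv G hGd p
  have hpue : pu G = Pu := funext fun p => pu_eq_fderiv G hGd p
  have hsliceW : ∀ (F : ℝ × ℝ → ℝ), ContDiff ℝ (⊤ : ℕ∞) F → ∀ u : ℝ,
      Differentiable ℝ (fun s : ℝ => F (u, s)) := fun F hF u =>
    (hF.comp (ContDiff.prodMk (contDiff_const : ContDiff ℝ (⊤ : ℕ∞) fun _ : ℝ => u) contDiff_id)).differentiable (by simp)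
  have hsliceU : ∀ (F : ℝ × ℝ → ℝ), ContDiff ℝ (⊤ : ℕ∞) F → ∀ w : ℝ,
      Differentiable ℝ (fun s : ℝ => F (s, w)) := fun F hF w =>
    (hF.comp (ContDiff.prodMk contDiff_id (contDiff_const : ContDiff ℝ (⊤ : ℕ∞) fun _ : ℝ => w))).differentiable (by simp)
  -- constancy in w of Pw and Pu
  have hPwc : ∀ u w : ℝ, Pw (u, w) = Pw (u, 0) := by
    intro u w
    refine is_const_of_deriv_eq_zero (hsliceW Pw hPwsm u) (fun x => ?_) w 0
    have := h3 (u, x); rw [hpwe] at this; exact this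
  have hPuc : ∀ u w : ℝ, Pu (u, w) = Pu (u, 0) := by
    intro u w
    refine is_const_of_deriv_eq_zero (hsliceW Pu hPusm u) (fun x => ?_) w 0
    have := h2 (u, x); rw [hpue] at this; exact this
  -- affine in w
  have key : ∀ u w : ℝ, G (u, w) = G (u, 0) + Pw (u, 0) * w := by
    intro u w
    have hk : ∀ x : ℝ, HasDerivAt (fun s => G (u, s) - Pw (u, 0) * s)
        (Pw (u, x) - Pw (u, 0)) x := by
      intro x
      have h1 : HasDerivAt (fun s => G (u, s)) (Pw (u, x)) x := by
        have hd := ((hsliceW G hG u) x).hasDerivAt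
        have he : deriv (fun s => G (u, s)) x = Pw (u, x) := by
          have := pw_eq_fderiv G hGd (u, x); exact this
        rwa [he] at hd
      have h2' : HasDerivAt (fun s : ℝ => Pw (u, 0) * s) (Pw (u, 0)) x := by
        simpa using (hasDerivAt_id x).const_mul (Pw (u, 0))
      exact h1.sub h2'
    have hdiff : Differentiable ℝ (fun s => G (u, s) - Pw (u, 0) * s) :=
      fun x => (hk x).differentiableAt
    have hz : ∀ x : ℝ, deriv (fun s => G (u, s) - Pw (u, 0) * s) x = 0 := by
      intro x; rw [(hk x).deriv, hPwc u x, sub_self]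
    have := is_const_of_deriv_eq_zero hdiff hz w 0
    simp only [mul_zero, sub_zero, mul_comm] at this
    linarith
  -- derivative of u ↦ Pw (u,0) is zero
  have hh : Differentiable ℝ (fun u : ℝ => Pw (u, 0)) := hsliceU Pw hPwsm 0
  have hgd : Differentiable ℝ (fun u : ℝ => G (u, 0)) := hsliceU G hG 0
  have hder : ∀ u w : ℝ, Pu (u, w) =
      deriv (fun s : ℝ => G (s, 0)) u + deriv (fun s : ℝ => Pw (s, 0)) u * w := by
    intro u w
    have hrw : (fun s : ℝ => G (s, w)) = fun s : ℝ => G (s, 0) + Pw (s, 0) * w :=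
      funext fun s => key s w
    have h1 : Pu (u, w) = deriv (fun s : ℝ => G (s, w)) u := by
      rw [← hpue]; rfl
    rw [h1, hrw]
    exact (((hgd u).hasDerivAt).add (((hh u).hasDerivAt).mul_const w)).deriv
  have hh0 : ∀ u : ℝ, deriv (fun s : ℝ => Pw (s, 0)) u = 0 := by
    intro u
    have e1 := hder u 1
    have e0 := hder u 0
    have ec := hPuc u 1
    rw [e1, e0] at ec
    simpa using ec
  have hβ : ∀ u : ℝ, Pw (u, 0) = Pw (0, 0) :=
    fun u => is_const_of_deriv_eq_zero hh hh0 u 0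
  refine ⟨Pw (0, 0), fun u => G (u, 0),
    hG.comp (ContDiff.prodMk contDiff_id contDiff_const), ?_⟩
  rintro ⟨u, w⟩
  have := key u w
  rw [hβ u] at this
  simp only []; linarith [this]


/-- Case 1 (η ≡ 1) of the classification: the integrability conditions hold iff
ψ = αw + f(u), φ = βw + g(u) with f'' = α(f' − β) and g'' = 2αg' − βf' − β². -/
theorem statement2
    (φ ψ : ℝ × ℝ → ℝ) (hφ : ContDiff ℝ (⊤ : ℕ∞) φ) (hψ : ContDiff ℝ (⊤ : ℕ∞) ψ) :
    IntCond φ ψ (fun _ => 1) Set.univ ↔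
    ∃ (α β : ℝ) (f g : ℝ → ℝ), ContDiff ℝ (⊤ : ℕ∞) f ∧ ContDiff ℝ (⊤ : ℕ∞) g ∧
      (∀ p : ℝ × ℝ, ψ p = α * p.2 + f p.1) ∧
      (∀ p : ℝ × ℝ, φ p = β * p.2 + g p.1) ∧
      (∀ x : ℝ, deriv (deriv f) x = α * (deriv f x - β)) ∧
      (∀ x : ℝ, deriv (deriv g) x = 2 * α * deriv g x - β * deriv f x - β ^ 2) := by
  constructor
  · intro H
    have h3φ : ∀ p, pw (pw φ) p = 0 := by
      intro p
      have h := (H p trivial).2.2.1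
      simpa [pw_one] using h
    have h2φ : ∀ p, pw (pu φ) p = 0 := by
      intro p
      have h := (H p trivial).2.1
      simpa [pw_one] using h
    have h3ψ : ∀ p, pw (pw ψ) p = 0 := by
      intro p
      have h := (H p trivial).2.2.2.2.2.1
      simpa [pw_one] using h
    have h2ψ : ∀ p, pw (pu ψ) p = 0 := by
      intro p
      have h := (H p trivial).2.2.2.2.1
      simpa [pw_one] using h
    obtain ⟨β, g, hg, hφe⟩ := master φ hφ h3φ h2φ
    obtain ⟨α, f, hf, hψe⟩ := master ψ hψ h3ψ h2ψ
    have hφfun : φ = fun q : ℝ × ℝ => β * q.2 + g q.1 := funext hφe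
    have hψfun : ψ = fun q : ℝ × ℝ => α * q.2 + f q.1 := funext hψe
    subst hφfun; subst hψfun
    refine ⟨α, β, f, g, hf, hg, hψe, hφe, ?_, ?_⟩
    · intro x
      have h := (H (x, 0) trivial).2.2.2.1
      simp only [pu_pu_closed, pw_closed, pu_closed, pu_one, pw_one, one_mul,
        mul_zero, zero_mul, sub_zero, add_zero] at h
      linear_combination h
    · intro x
      have h := (H (x, 0) trivial).1
      simp only [pu_pu_closed, pw_closed, pu_closed, one_mul] at h
      linear_combination h
  · rintro ⟨α, β, f, g, hf, hg, hψe, hφe, hODEf, hODEg⟩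
    have hφfun : φ = fun q : ℝ × ℝ => β * q.2 + g q.1 := funext hφe
    have hψfun : ψ = fun q : ℝ × ℝ => α * q.2 + f q.1 := funext hψe
    subst hφfun; subst hψfun
    intro p _
    refine ⟨?_, ?_, ?_, ?_, ?_, ?_, ?_, ?_, ?_⟩ <;>
      simp only [pu_pu_closed, pw_pu_closed, pw_pw_closed, pu_closed, pw_closed,
        pu_one, pw_one, pu_pu_one, pw_pu_one, pw_pw_one, one_mul, mul_zero,
        zero_mul, neg_zero, sub_zero, add_zero]
    · linear_combination hODEg p.1
    · linear_combination hODEf p.1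
    all_goals simp
end

section
/- Let φ, ψ : (0,∞) × ℝ → ℝ be smooth functions of (u,w) and set η(u,w) = u. Then the triple (φ, ψ, η) satisfies the integrability conditions on (0,∞) × ℝ if and only if there exist constants α, β ∈ ℝ and smooth functions f, g : (0,∞) → ℝ such that ψ(u,w) = α·w + f(u), φ(u,w) = β·w + g(u), and u·f'' = α(f' − β) − 2β, u·g'' = 2α·g' − β·f' − β² hold identically on (0,∞). -/
namespace Statement5Aux

open Set Filter

/-- The domain. -/
noncomputable abbrev U : Set (ℝ × ℝ) := Set.Ioi 0 ×ˢ Set.univ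

lemma hUo : IsOpen U := isOpen_Ioi.prod isOpen_univ

lemma memU {u w : ℝ} (hu : 0 < u) : (u, w) ∈ U := ⟨hu, trivial⟩

lemma hasDerivAt_sliceU {f : ℝ × ℝ → ℝ} {p : ℝ × ℝ} (hf : DifferentiableAt ℝ f p) :
    HasDerivAt (fun s => f (s, p.2)) (fderiv ℝ f p (1, 0)) p.1 := by
  have h1 : HasDerivAt (fun s : ℝ => (s, p.2)) ((1 : ℝ), (0 : ℝ)) p.1 :=
    (hasDerivAt_id p.1).prodMk (hasDerivAt_const p.1 p.2)
  exact hf.hasFDerivAt.comp_hasDerivAt p.1 h1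

lemma hasDerivAt_sliceW {f : ℝ × ℝ → ℝ} {p : ℝ × ℝ} (hf : DifferentiableAt ℝ f p) :
    HasDerivAt (fun s => f (p.1, s)) (fderiv ℝ f p (0, 1)) p.2 := by
  have h1 : HasDerivAt (fun s : ℝ => (p.1, s)) ((0 : ℝ), (1 : ℝ)) p.2 :=
    (hasDerivAt_const p.2 p.1).prodMk (hasDerivAt_id p.2)
  exact hf.hasFDerivAt.comp_hasDerivAt p.2 h1

/-- If a real function has zero derivative on `Ioi 0`, it is constant there. -/
lemma const_on_Ioi {k : ℝ → ℝ} (hk : ∀ x ∈ Ioi (0 : ℝ), HasDerivAt k 0 x)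
    {x y : ℝ} (hx : x ∈ Ioi (0 : ℝ)) (hy : y ∈ Ioi (0 : ℝ)) : k x = k y := by
  refine (convex_Ioi (0 : ℝ)).is_const_of_fderivWithin_eq_zero
    (fun z hz => ((hk z hz).differentiableAt).differentiableWithinAt) ?_ hx hy
  intro z hz
  rw [fderivWithin_of_isOpen isOpen_Ioi hz, (hk z hz).hasFDerivAt.fderiv]
  ext
  simp

/-- Derivative computations for a function of the form `X (u, w) = c * w + r u` on `U`. -/
lemma comps {X : ℝ × ℝ → ℝ} {c : ℝ} {r : ℝ → ℝ}
    (hs : ∀ u ∈ Ioi (0 : ℝ), ∀ w : ℝ, X (u, w) = c * w + r u) :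
    ∀ u ∈ Ioi (0 : ℝ), ∀ w : ℝ,
      pw X (u, w) = c ∧ pu X (u, w) = deriv r u ∧ pw (pw X) (u, w) = 0 ∧
      pw (pu X) (u, w) = 0 ∧ pu (pu X) (u, w) = deriv (deriv r) u := by
  have hpw : ∀ u ∈ Ioi (0 : ℝ), ∀ w : ℝ, pw X (u, w) = c := by
    intro u hu w
    have hfun : (fun s => X (u, s)) = fun s => c * s + r u := funext fun s => hs u hu s
    have hd : HasDerivAt (fun s : ℝ => c * s + r u) c w := by
      simpa using ((hasDerivAt_id w).const_mul c).add_const (r u)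
    show deriv (fun s => X (u, s)) w = c
    rw [hfun]
    exact hd.deriv
  have hpu : ∀ u ∈ Ioi (0 : ℝ), ∀ w : ℝ, pu X (u, w) = deriv r u := by
    intro u hu w
    have hev : (fun s => X (s, w)) =ᶠ[nhds u] fun s => c * w + r s := by
      filter_upwards [Ioi_mem_nhds hu] with s hs' using hs s hs' w
    show deriv (fun s => X (s, w)) u = deriv r u
    rw [hev.deriv_eq, deriv_const_add]
  intro u hu w
  refine ⟨hpw u hu w, hpu u hu w, ?_, ?_, ?_⟩
  · show deriv (fun s => pw X (u, s)) w = 0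
    have hfun : (fun s => pw X (u, s)) = fun _ => c := funext fun s => hpw u hu s
    rw [hfun, deriv_const]
  · show deriv (fun s => pu X (u, s)) w = 0
    have hfun : (fun s => pu X (u, s)) = fun _ => deriv r u := funext fun s => hpu u hu s
    rw [hfun, deriv_const]
  · show deriv (fun s => pu X (s, w)) u = deriv (deriv r) u
    have hev : (fun s => pu X (s, w)) =ᶠ[nhds u] deriv r := by
      filter_upwards [Ioi_mem_nhds hu] with s hs' using hpu s hs' w
    exact hev.deriv_eq

/-- Derivative computations for η (u, w) = u. -/
lemma comps_eta (p : ℝ × ℝ) :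
    pu (fun q : ℝ × ℝ => q.1) p = 1 ∧ pw (fun q : ℝ × ℝ => q.1) p = 0 ∧
    pu (pu (fun q : ℝ × ℝ => q.1)) p = 0 ∧ pw (pu (fun q : ℝ × ℝ => q.1)) p = 0 ∧
    pw (pw (fun q : ℝ × ℝ => q.1)) p = 0 := by
  have hpu : ∀ q : ℝ × ℝ, pu (fun q : ℝ × ℝ => q.1) q = 1 := by
    intro q
    show deriv (fun s : ℝ => s) q.1 = 1
    simp
  have hpw : ∀ q : ℝ × ℝ, pw (fun q : ℝ × ℝ => q.1) q = 0 := by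
    intro q
    show deriv (fun _ : ℝ => q.1) q.2 = 0
    simp
  refine ⟨hpu p, hpw p, ?_, ?_, ?_⟩
  · show deriv (fun s => pu (fun q : ℝ × ℝ => q.1) (s, p.2)) p.1 = 0
    have : (fun s => pu (fun q : ℝ × ℝ => q.1) (s, p.2)) = fun _ => (1 : ℝ) :=
      funext fun s => hpu (s, p.2)
    rw [this, deriv_const]
  · show deriv (fun s => pu (fun q : ℝ × ℝ => q.1) (p.1, s)) p.2 = 0
    have : (fun s => pu (fun q : ℝ × ℝ => q.1) (p.1, s)) = fun _ => (1 : ℝ) :=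
      funext fun s => hpu (p.1, s)
    rw [this, deriv_const]
  · show deriv (fun s => pw (fun q : ℝ × ℝ => q.1) (p.1, s)) p.2 = 0
    have : (fun s => pw (fun q : ℝ × ℝ => q.1) (p.1, s)) = fun _ => (0 : ℝ) :=
      funext fun s => hpw (p.1, s)
    rw [this, deriv_const]

/-- Structure theorem: if `X` is smooth on `U` with `pw (pu X) = 0` and `pw (pw X) = 0`
on `U`, then `X (u, w) = c * w + X (u, 0)`. -/
lemma structure_of {X : ℝ × ℝ → ℝ} (hX : ContDiffOn ℝ (⊤ : ℕ∞) X U)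
    (h2 : ∀ u ∈ Ioi (0 : ℝ), ∀ w : ℝ, pw (pu X) (u, w) = 0)
    (h3 : ∀ u ∈ Ioi (0 : ℝ), ∀ w : ℝ, pw (pw X) (u, w) = 0) :
    ∃ c : ℝ, ∀ u ∈ Ioi (0 : ℝ), ∀ w : ℝ, X (u, w) = c * w + X (u, 0) := by
  have hdiff : ∀ p ∈ U, DifferentiableAt ℝ X p := fun p hp =>
    (hX.contDiffAt (hUo.mem_nhds hp)).differentiableAt (by simp)
  have hpu_eq : ∀ p ∈ U, pu X p = fderiv ℝ X p (1, 0) := fun p hp =>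
    (hasDerivAt_sliceU (hdiff p hp)).deriv
  have hpw_eq : ∀ p ∈ U, pw X p = fderiv ℝ X p (0, 1) := fun p hp =>
    (hasDerivAt_sliceW (hdiff p hp)).deriv
  have hfd : ∀ v : ℝ × ℝ, ∀ p ∈ U, ContDiffAt ℝ (⊤ : ℕ∞) (fun q => fderiv ℝ X q v) p :=
    fun v p hp =>
      ((hX.contDiffAt (hUo.mem_nhds hp)).fderiv_right (by simp)).clm_apply contDiffAt_const
  -- slice differentiability of q ↦ fderiv X q v along w, at fixed u > 0
  have hslice_diff : ∀ v : ℝ × ℝ, ∀ u ∈ Ioi (0 : ℝ),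
      Differentiable ℝ (fun s => fderiv ℝ X (u, s) v) := by
    intro v u hu s
    have h1 : DifferentiableAt ℝ (fun q => fderiv ℝ X q v) (u, s) :=
      (hfd v (u, s) (memU hu)).differentiableAt (by simp)
    exact h1.comp s ((differentiableAt_const u).prodMk differentiableAt_id)
  -- pu X is constant in w
  have hconstw : ∀ u ∈ Ioi (0 : ℝ), ∀ w : ℝ, pu X (u, w) = pu X (u, 0) := by
    intro u hu w
    have hfun : (fun s => pu X (u, s)) = fun s => fderiv ℝ X (u, s) (1, 0) :=
      funext fun s => hpu_eq (u, s) (memU hu)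
    have hdk : Differentiable ℝ (fun s => pu X (u, s)) := by
      rw [hfun]; exact hslice_diff (1, 0) u hu
    exact is_const_of_deriv_eq_zero hdk (fun x => h2 u hu x) w 0
  -- X (u, w) - X (u, 0) is independent of u
  have hconstu : ∀ w : ℝ, ∀ u ∈ Ioi (0 : ℝ),
      X (u, w) - X (u, 0) = X (1, w) - X (1, 0) := by
    intro w u hu
    have hk : ∀ x ∈ Ioi (0 : ℝ), HasDerivAt (fun t => X (t, w) - X (t, 0)) 0 x := by
      intro x hx
      have h1 : HasDerivAt (fun t => X (t, w)) (fderiv ℝ X (x, w) (1, 0)) x :=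
        hasDerivAt_sliceU (hdiff (x, w) (memU hx))
      have h2' : HasDerivAt (fun t => X (t, 0)) (fderiv ℝ X (x, 0) (1, 0)) x :=
        hasDerivAt_sliceU (hdiff (x, 0) (memU hx))
      have heq : fderiv ℝ X (x, w) (1, 0) = fderiv ℝ X (x, 0) (1, 0) := by
        rw [← hpu_eq (x, w) (memU hx), ← hpu_eq (x, 0) (memU hx)]
        exact hconstw x hx w
      have := h1.sub h2'
      rw [heq, sub_self] at this
      exact this
    exact const_on_Ioi hk hu (by norm_num : (1 : ℝ) ∈ Ioi (0 : ℝ))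
  -- the function c
  set cf : ℝ → ℝ := fun w => X (1, w) - X (1, 0) with hcf
  have hXeq : ∀ u ∈ Ioi (0 : ℝ), ∀ w : ℝ, X (u, w) = cf w + X (u, 0) := by
    intro u hu w
    have := hconstu w u hu
    simp only [hcf]
    linarith
  have h1mem : (1 : ℝ) ∈ Ioi (0 : ℝ) := by norm_num
  -- pw X (u, w) = deriv cf w  for u > 0
  have hpwc : ∀ u ∈ Ioi (0 : ℝ), ∀ w : ℝ, pw X (u, w) = deriv cf w := by
    intro u hu w
    show deriv (fun s => X (u, s)) w = deriv cf w
    have hfun : (fun s => X (u, s)) = fun s => cf s + X (u, 0) :=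
      funext fun s => hXeq u hu s
    rw [hfun, deriv_add_const]
  -- deriv cf is differentiable with zero derivative, hence constant
  have hcf_deriv : ∀ w : ℝ, deriv cf w = fderiv ℝ X (1, w) (0, 1) := by
    intro w
    rw [← hpwc 1 h1mem w]
    exact hpw_eq (1, w) (memU h1mem)
  have hder_diff : Differentiable ℝ (deriv cf) := by
    have : deriv cf = fun s => fderiv ℝ X (1, s) (0, 1) := funext hcf_deriv
    rw [this]
    exact hslice_diff (0, 1) 1 h1mem
  have hder_zero : ∀ w : ℝ, deriv (deriv cf) w = 0 := by
    intro w
    have hfun : (fun s => pw X (1, s)) = deriv cf := funext fun s => hpwc 1 h1mem s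
    have := h3 1 h1mem w
    have hshow : pw (pw X) (1, w) = deriv (deriv cf) w := by
      show deriv (fun s => pw X (1, s)) w = deriv (deriv cf) w
      rw [hfun]
    rw [← hshow]
    exact this
  set c : ℝ := deriv cf 0 with hc
  have hder_const : ∀ w : ℝ, deriv cf w = c :=
    fun w => is_const_of_deriv_eq_zero hder_diff hder_zero w 0
  -- cf is differentiable
  have hcf_diff : Differentiable ℝ cf := by
    intro w
    have h1 : DifferentiableAt ℝ (fun s => X (1, s)) w := by
      have := (hX.contDiffAt (hUo.mem_nhds (memU h1mem : ((1 : ℝ), w) ∈ U))).differentiableAt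
        (by simp)
      exact (hasDerivAt_sliceW this).differentiableAt
    exact h1.sub_const _
  -- cf w = c * w
  have hcf_lin : ∀ w : ℝ, cf w = c * w := by
    intro w
    have hd : ∀ w : ℝ, HasDerivAt (fun w => cf w - c * w) (deriv cf w - c) w := by
      intro w
      exact ((hcf_diff w).hasDerivAt).sub (by simpa using (hasDerivAt_id w).const_mul c)
    have hlin : Differentiable ℝ (fun w => cf w - c * w) := fun w => (hd w).differentiableAt
    have hz : ∀ w : ℝ, deriv (fun w => cf w - c * w) w = 0 := by
      intro w
      rw [(hd w).deriv, hder_const w, sub_self]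
    have := is_const_of_deriv_eq_zero hlin hz w 0
    simp only [hcf] at this ⊢
    have h0 : X (1, (0 : ℝ)) - X (1, 0) = 0 := sub_self _
    linarith [this]
  refine ⟨c, fun u hu w => ?_⟩
  rw [hXeq u hu w, hcf_lin w]

end Statement5Aux

/-- Case 2 (η = u) of the classification, on the domain (0,∞) × ℝ: the integrability
conditions hold iff ψ = αw + f(u), φ = βw + g(u) with u f'' = α(f' − β) − 2β and
u g'' = 2αg' − βf' − β². -/
theorem statement5
    (φ ψ : ℝ × ℝ → ℝ)
    (hφ : ContDiffOn ℝ (⊤ : ℕ∞) φ (Set.Ioi 0 ×ˢ Set.univ))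
    (hψ : ContDiffOn ℝ (⊤ : ℕ∞) ψ (Set.Ioi 0 ×ˢ Set.univ)) :
    IntCond φ ψ (fun p => p.1) (Set.Ioi 0 ×ˢ Set.univ) ↔
    ∃ (α β : ℝ) (f g : ℝ → ℝ),
      ContDiffOn ℝ (⊤ : ℕ∞) f (Set.Ioi 0) ∧ ContDiffOn ℝ (⊤ : ℕ∞) g (Set.Ioi 0) ∧
      (∀ p ∈ (Set.Ioi 0 ×ˢ Set.univ : Set (ℝ × ℝ)), ψ p = α * p.2 + f p.1) ∧
      (∀ p ∈ (Set.Ioi 0 ×ˢ Set.univ : Set (ℝ × ℝ)), φ p = β * p.2 + g p.1) ∧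
      (∀ x ∈ Set.Ioi (0 : ℝ), x * deriv (deriv f) x = α * (deriv f x - β) - 2 * β) ∧
      (∀ x ∈ Set.Ioi (0 : ℝ),
        x * deriv (deriv g) x = 2 * α * deriv g x - β * deriv f x - β ^ 2) := by
  open Set Statement5Aux in
  constructor
  · -- forward direction
    intro h
    -- the pw-of-derivative conditions force structure
    have hηw : ∀ p : ℝ × ℝ, pw (fun q : ℝ × ℝ => q.1) p = 0 := fun p => (comps_eta p).2.1
    have hφ2 : ∀ u ∈ Ioi (0 : ℝ), ∀ w : ℝ, pw (pu φ) (u, w) = 0 := by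
      intro u hu w
      have h1 := (h (u, w) (memU hu)).2.1
      have h2' : u * pw (pu φ) (u, w) = pw (fun q : ℝ × ℝ => q.1) (u, w) * (pu φ (u, w)) := h1
      rw [hηw (u, w), zero_mul] at h2'
      exact (mul_eq_zero.mp h2').resolve_left (ne_of_gt hu)
    have hφ3 : ∀ u ∈ Ioi (0 : ℝ), ∀ w : ℝ, pw (pw φ) (u, w) = 0 := by
      intro u hu w
      have h1 := (h (u, w) (memU hu)).2.2.1
      have h2' : u * pw (pw φ) (u, w) = pw (fun q : ℝ × ℝ => q.1) (u, w) * (pw φ (u, w)) := h1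
      rw [hηw (u, w), zero_mul] at h2'
      exact (mul_eq_zero.mp h2').resolve_left (ne_of_gt hu)
    have hψ2 : ∀ u ∈ Ioi (0 : ℝ), ∀ w : ℝ, pw (pu ψ) (u, w) = 0 := by
      intro u hu w
      have h1 := (h (u, w) (memU hu)).2.2.2.2.1
      have h2' : u * pw (pu ψ) (u, w) = pw (fun q : ℝ × ℝ => q.1) (u, w) * (pu ψ (u, w)) := h1
      rw [hηw (u, w), zero_mul] at h2'
      exact (mul_eq_zero.mp h2').resolve_left (ne_of_gt hu)
    have hψ3 : ∀ u ∈ Ioi (0 : ℝ), ∀ w : ℝ, pw (pw ψ) (u, w) = 0 := by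
      intro u hu w
      have h1 := (h (u, w) (memU hu)).2.2.2.2.2.1
      have h2' : u * pw (pw ψ) (u, w) = pw (fun q : ℝ × ℝ => q.1) (u, w) * (pw ψ (u, w)) := h1
      rw [hηw (u, w), zero_mul] at h2'
      exact (mul_eq_zero.mp h2').resolve_left (ne_of_gt hu)
    obtain ⟨β, hβ⟩ := structure_of hφ hφ2 hφ3
    obtain ⟨α, hα⟩ := structure_of hψ hψ2 hψ3
    set f : ℝ → ℝ := fun x => ψ (x, 0) with hf_def
    set g : ℝ → ℝ := fun x => φ (x, 0) with hg_def
    have hψs : ∀ u ∈ Ioi (0 : ℝ), ∀ w : ℝ, ψ (u, w) = α * w + f u := fun u hu w => hα u hu w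
    have hφs : ∀ u ∈ Ioi (0 : ℝ), ∀ w : ℝ, φ (u, w) = β * w + g u := fun u hu w => hβ u hu w
    have hcψ := comps hψs
    have hcφ := comps hφs
    have hmap : Set.MapsTo (fun x : ℝ => (x, (0 : ℝ))) (Ioi 0) U := fun x hx => memU hx
    have hsm : ContDiff ℝ (⊤ : ℕ∞) (fun x : ℝ => (x, (0 : ℝ))) := contDiff_id.prodMk contDiff_const
    refine ⟨α, β, f, g, hψ.comp hsm.contDiffOn hmap, hφ.comp hsm.contDiffOn hmap,
      fun p hp => by rw [show p = (p.1, p.2) from rfl]; exact hψs p.1 hp.1 p.2,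
      fun p hp => by rw [show p = (p.1, p.2) from rfl]; exact hφs p.1 hp.1 p.2, ?_, ?_⟩
    · -- ODE for f from condition 4 at (x, 0)
      intro x hx
      have hc := (h (x, 0) (memU hx)).2.2.2.1
      obtain ⟨e1, e2, e3, e4, e5⟩ := comps_eta ((x : ℝ), (0 : ℝ))
      obtain ⟨q1, q2, q3, q4, q5⟩ := hcψ x hx 0
      obtain ⟨r1, r2, r3, r4, r5⟩ := hcφ x hx 0
      simp only [q1, q2, q5, r1, r2, e1, e2] at hc
      linarith
    · -- ODE for g from condition 1 at (x, 0)
      intro x hx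
      have hc := (h (x, 0) (memU hx)).1
      obtain ⟨q1, q2, q3, q4, q5⟩ := hcψ x hx 0
      obtain ⟨r1, r2, r3, r4, r5⟩ := hcφ x hx 0
      simp only [q1, q2, r1, r2, r5] at hc
      nlinarith [hc]
  · -- converse direction
    rintro ⟨α, β, f, g, hf, hg, hψeq, hφeq, hODEf, hODEg⟩ p hp
    obtain ⟨hu, -⟩ := hp
    have hψs : ∀ u ∈ Ioi (0 : ℝ), ∀ w : ℝ, ψ (u, w) = α * w + f u :=
      fun u hu' w => hψeq (u, w) (memU hu')
    have hφs : ∀ u ∈ Ioi (0 : ℝ), ∀ w : ℝ, φ (u, w) = β * w + g u :=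
      fun u hu' w => hφeq (u, w) (memU hu')
    have hp' : p = (p.1, p.2) := rfl
    obtain ⟨q1, q2, q3, q4, q5⟩ := comps hψs p.1 hu p.2
    obtain ⟨r1, r2, r3, r4, r5⟩ := comps hφs p.1 hu p.2
    obtain ⟨e1, e2, e3, e4, e5⟩ := comps_eta p
    rw [hp'] at q1 q2 q3 q4 q5 r1 r2 r3 r4 r5 ⊢
    rw [show ((p.1, p.2) : ℝ × ℝ) = p from rfl] at *
    have hodef := hODEf p.1 hu
    have hodeg := hODEg p.1 hu
    refine ⟨?_, ?_, ?_, ?_, ?_, ?_, ?_, ?_, ?_⟩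
    all_goals simp only [q1, q2, q3, q4, q5, r1, r2, r3, r4, r5, e1, e2, e3, e4, e5]
    · nlinarith [hodeg]
    · ring
    · ring
    · linarith
    · ring
    · ring
    · ring
    · ring
    · ring
end

section
/- Let α, β ∈ ℝ with α ∉ {0, −1, −1/2}, and let f, g : (0,∞) → ℝ be smooth. Then f and g satisfy the ordinary differential equations u·f'' = α(f' − β) − 2β and u·g'' = 2α·g' − β·f' − β² identically on (0,∞) if and only if there exist constants C, D, c, c' ∈ ℝ such that f(u) = ((α+2)β/α)·u + (C/(α+1))·u^{α+1} + c and g(u) = (β²(α+1)/α²)·u + (βC/(α(α+1)))·u^{α+1} + (D/(2α+1))·u^{2α+1} + c' for all u > 0. -/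
open Set

lemma constOn6 {w : ℝ → ℝ} (hw : ∀ u ∈ Set.Ioi (0:ℝ), HasDerivAt w 0 u) :
    ∀ u ∈ Set.Ioi (0:ℝ), w u = w 1 := by
  intro u hu
  have h1 : (1:ℝ) ∈ Set.Ioi (0:ℝ) := by norm_num
  refine (convex_Ioi (0:ℝ)).is_const_of_fderivWithin_eq_zero
    (fun z hz => ((hw z hz).differentiableAt).differentiableWithinAt) (fun z hz => ?_) hu h1
  rw [fderivWithin_of_isOpen isOpen_Ioi hz, (hw z hz).hasFDerivAt.fderiv]
  ext; simp

lemma homODE6 {w w' : ℝ → ℝ} {k : ℝ}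
    (hw : ∀ u ∈ Set.Ioi (0:ℝ), HasDerivAt w (w' u) u)
    (hode : ∀ u ∈ Set.Ioi (0:ℝ), u * w' u = k * w u) :
    ∀ u ∈ Set.Ioi (0:ℝ), w u = w 1 * u ^ k := by
  have key : ∀ u ∈ Set.Ioi (0:ℝ), HasDerivAt (fun x => w x * x ^ (-k)) 0 u := by
    intro u hu
    have hu0 : (0:ℝ) < u := hu
    have h1 : HasDerivAt (fun x : ℝ => x ^ (-k)) (-k * u ^ (-k-1)) u :=
      Real.hasDerivAt_rpow_const (Or.inl hu0.ne')
    have h2 := (hw u hu).fun_mul h1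
    refine h2.congr_deriv ?_
    have e1 : u ^ (-k) = u ^ (-k-1) * u := by
      rw [← Real.rpow_add_one hu0.ne' (-k-1)]; ring_nf
    rw [e1]
    linear_combination (u ^ (-k-1)) * (hode u hu)
  intro u hu
  have hc := constOn6 key u hu
  simp only [Real.one_rpow, mul_one] at hc
  have hpos : (0:ℝ) < u := hu
  have hinv : u ^ (-k) * u ^ k = 1 := by
    rw [← Real.rpow_add hpos]; simp
  calc w u = w u * (u ^ (-k) * u ^ k) := by rw [hinv, mul_one]
    _ = (w u * u ^ (-k)) * u ^ k := by ring
    _ = w 1 * u ^ k := by rw [hc]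

lemma antider6 {p q d : ℝ → ℝ}
    (hp : ∀ u ∈ Set.Ioi (0:ℝ), HasDerivAt p (d u) u)
    (hq : ∀ u ∈ Set.Ioi (0:ℝ), HasDerivAt q (d u) u) :
    ∃ c, ∀ u ∈ Set.Ioi (0:ℝ), p u = q u + c := by
  refine ⟨p 1 - q 1, fun u hu => ?_⟩
  have h0 : ∀ z ∈ Set.Ioi (0:ℝ), HasDerivAt (fun x => p x - q x) 0 z := fun z hz => by
    simpa using (hp z hz).fun_sub (hq z hz)
  have := constOn6 h0 u hu
  linarith

lemma hasDerivAt_rpow_cm (b p : ℝ) {u : ℝ} (hu : (0:ℝ) < u) :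
    HasDerivAt (fun x : ℝ => b * x ^ p) (b * (p * u ^ (p-1))) u :=
  (Real.hasDerivAt_rpow_const (Or.inl hu.ne')).const_mul b

lemma hasDerivAt_lin_rpow (a b p : ℝ) {u : ℝ} (hu : (0:ℝ) < u) :
    HasDerivAt (fun x : ℝ => a * x + b * x ^ p) (a + b * (p * u ^ (p-1))) u := by
  have h := ((hasDerivAt_id u).const_mul a).fun_add (hasDerivAt_rpow_cm b p hu)
  simpa using h

lemma hasDerivAt_lin_rpow2 (a b p d q : ℝ) {u : ℝ} (hu : (0:ℝ) < u) :
    HasDerivAt (fun x : ℝ => a * x + b * x ^ p + d * x ^ q)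
      (a + b * (p * u ^ (p-1)) + d * (q * u ^ (q-1))) u :=
  (hasDerivAt_lin_rpow a b p hu).add (hasDerivAt_rpow_cm d q hu)

/-- General solution of the ODE system u f'' = α(f' − β) − 2β, u g'' = 2αg' − βf' − β²
on (0,∞) for α ∉ {0, −1, −1/2}: the power-like solutions of Case 2 of the classification. -/
theorem statement6
    (α β : ℝ) (hα0 : α ≠ 0) (hα1 : α ≠ -1) (hα2 : α ≠ -(1 / 2))
    (f g : ℝ → ℝ)
    (hf : ContDiffOn ℝ (⊤ : ℕ∞) f (Set.Ioi 0)) (hg : ContDiffOn ℝ (⊤ : ℕ∞) g (Set.Ioi 0)) :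
    ((∀ u ∈ Set.Ioi (0 : ℝ), u * deriv (deriv f) u = α * (deriv f u - β) - 2 * β) ∧
     (∀ u ∈ Set.Ioi (0 : ℝ),
        u * deriv (deriv g) u = 2 * α * deriv g u - β * deriv f u - β ^ 2)) ↔
    ∃ C D c c' : ℝ,
      (∀ u ∈ Set.Ioi (0 : ℝ),
        f u = ((α + 2) * β / α) * u + (C / (α + 1)) * u ^ (α + 1) + c) ∧
      (∀ u ∈ Set.Ioi (0 : ℝ),
        g u = (β ^ 2 * (α + 1) / α ^ 2) * u + (β * C / (α * (α + 1))) * u ^ (α + 1)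
          + (D / (2 * α + 1)) * u ^ (2 * α + 1) + c') := by
  have hα1' : α + 1 ≠ 0 := fun h => hα1 (by linarith)
  have hα2' : 2 * α + 1 ≠ 0 := fun h => hα2 (by linarith)
  constructor
  · rintro ⟨hF, hG⟩
    -- differentiability facts
    have hdf : ∀ u ∈ Set.Ioi (0:ℝ), HasDerivAt f (deriv f u) u := fun u hu =>
      ((hf.differentiableOn (by simp)).differentiableAt (isOpen_Ioi.mem_nhds hu)).hasDerivAt
    have hdg : ∀ u ∈ Set.Ioi (0:ℝ), HasDerivAt g (deriv g u) u := fun u hu =>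
      ((hg.differentiableOn (by simp)).differentiableAt (isOpen_Ioi.mem_nhds hu)).hasDerivAt
    have hdf2 : ∀ u ∈ Set.Ioi (0:ℝ), HasDerivAt (deriv f) (deriv (deriv f) u) u := fun u hu =>
      (((hf.deriv_of_isOpen isOpen_Ioi (m := 1) (by show ((1 + 1 : ℕ∞) : WithTop ℕ∞) ≤ ((⊤ : ℕ∞) : WithTop ℕ∞); exact WithTop.coe_le_coe.mpr le_top)).differentiableOn one_ne_zero).differentiableAt
        (isOpen_Ioi.mem_nhds hu)).hasDerivAt
    have hdg2 : ∀ u ∈ Set.Ioi (0:ℝ), HasDerivAt (deriv g) (deriv (deriv g) u) u := fun u hu =>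
      (((hg.deriv_of_isOpen isOpen_Ioi (m := 1) (by show ((1 + 1 : ℕ∞) : WithTop ℕ∞) ≤ ((⊤ : ℕ∞) : WithTop ℕ∞); exact WithTop.coe_le_coe.mpr le_top)).differentiableOn one_ne_zero).differentiableAt
        (isOpen_Ioi.mem_nhds hu)).hasDerivAt
    -- step 1: solve for f'
    have hs1 := homODE6 (w := fun u => α * deriv f u - (α+2)*β)
      (w' := fun u => α * deriv (deriv f) u) (k := α)
      (fun u hu => ((hdf2 u hu).const_mul α).sub_const _)
      (fun u hu => by have h := hF u hu; linear_combination α * h)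
    set C₀ : ℝ := α * deriv f 1 - (α+2)*β with hC₀
    have e3 : ∀ u ∈ Set.Ioi (0:ℝ), deriv f u = (α+2)*β/α + (C₀/α) * u ^ α := by
      intro u hu
      have h := hs1 u hu
      field_simp
      linear_combination h
    -- antiderivative for f
    obtain ⟨c, hc⟩ := antider6 (d := fun u => (α+2)*β/α + (C₀/α) * u ^ α)
      (p := f) (q := fun x => ((α + 2) * β / α) * x + ((C₀/α) / (α + 1)) * x ^ (α + 1))
      (fun u hu => by have h := hdf u hu; rw [e3 u hu] at h; exact h)
      (fun u hu => by
        have h := hasDerivAt_lin_rpow ((α + 2) * β / α) ((C₀/α) / (α + 1)) (α+1) hu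
        convert h using 1
        rw [show α + 1 - 1 = α by ring]
        field_simp)
    -- step 2: solve for g'
    have hs2 := homODE6 (w := fun u => α^2 * deriv g u - β^2*(α+1) - β*C₀ * u ^ α)
      (w' := fun u => α^2 * deriv (deriv g) u - β*C₀ * (α * u ^ (α-1))) (k := 2*α)
      (fun u hu => (((hdg2 u hu).const_mul (α^2)).sub_const _).sub
        (hasDerivAt_rpow_cm (β*C₀) α hu))
      (fun u hu => by
        have hu0 : (0:ℝ) < u := hu
        have h4 := hG u hu
        have h5 := hs1 u hu
        have e1 : u ^ (α-1) * u = u ^ α := by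
          rw [← Real.rpow_add_one hu0.ne' (α-1)]; ring_nf
        linear_combination α^2 * h4 - α*β*h5 - α*β*C₀*e1)
    set D₀ : ℝ := α^2 * deriv g 1 - β^2*(α+1) - β*C₀ * (1:ℝ) ^ α with hD₀
    have e4 : ∀ u ∈ Set.Ioi (0:ℝ),
        deriv g u = β^2*(α+1)/α^2 + (β*C₀/α^2) * u ^ α + (D₀/α^2) * u ^ (2*α) := by
      intro u hu
      have h := hs2 u hu
      field_simp
      linear_combination (norm := ring_nf) h
    obtain ⟨c', hc'⟩ := antider6
      (d := fun u => β^2*(α+1)/α^2 + (β*C₀/α^2) * u ^ α + (D₀/α^2) * u ^ (2*α))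
      (p := g)
      (q := fun x => (β ^ 2 * (α + 1) / α ^ 2) * x + (β * (C₀/α) / (α * (α + 1))) * x ^ (α + 1)
          + ((D₀/α^2) / (2 * α + 1)) * x ^ (2 * α + 1))
      (fun u hu => by have h := hdg u hu; rw [e4 u hu] at h; exact h)
      (fun u hu => by
        have h := hasDerivAt_lin_rpow2 (β ^ 2 * (α + 1) / α ^ 2) (β * (C₀/α) / (α * (α + 1)))
          (α+1) ((D₀/α^2) / (2 * α + 1)) (2*α+1) hu
        convert h using 1
        rw [show α + 1 - 1 = α by ring, show 2*α + 1 - 1 = 2*α by ring]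
        field_simp
        have h2' : α * 2 + 1 ≠ 0 := fun h' => hα2' (by linarith)
        field_simp)
    exact ⟨C₀/α, D₀/α^2, c, c', hc, hc'⟩
  · rintro ⟨C, D, c, c', hfe, hge⟩
    have derivf : ∀ u ∈ Set.Ioi (0:ℝ), deriv f u = (α + 2) * β / α + C * u ^ α := by
      intro u hu
      have heq : f =ᶠ[nhds u] fun x => ((α + 2) * β / α) * x + (C / (α + 1)) * x ^ (α + 1) + c :=
        Filter.eventuallyEq_of_mem (isOpen_Ioi.mem_nhds hu) (fun x hx => hfe x hx)
      rw [heq.deriv_eq]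
      have h := ((hasDerivAt_lin_rpow ((α + 2) * β / α) (C / (α + 1)) (α+1) hu).add_const c)
      rw [h.deriv, show α + 1 - 1 = α by ring]
      field_simp
    have derivg : ∀ u ∈ Set.Ioi (0:ℝ),
        deriv g u = β ^ 2 * (α + 1) / α ^ 2 + (β*C/α) * u ^ α + D * u ^ (2*α) := by
      intro u hu
      have heq : g =ᶠ[nhds u] fun x => (β ^ 2 * (α + 1) / α ^ 2) * x
          + (β * C / (α * (α + 1))) * x ^ (α + 1) + (D / (2 * α + 1)) * x ^ (2 * α + 1) + c' :=
        Filter.eventuallyEq_of_mem (isOpen_Ioi.mem_nhds hu) (fun x hx => hge x hx)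
      rw [heq.deriv_eq]
      have h := ((hasDerivAt_lin_rpow2 (β ^ 2 * (α + 1) / α ^ 2) (β * C / (α * (α + 1)))
        (α+1) (D / (2 * α + 1)) (2*α+1) hu).add_const c')
      rw [h.deriv, show α + 1 - 1 = α by ring, show 2*α + 1 - 1 = 2*α by ring]
      field_simp
      have h2' : α * 2 + 1 ≠ 0 := fun h' => hα2' (by linarith)
      field_simp
    constructor
    · intro u hu
      have hu0 : (0:ℝ) < u := hu
      have heq2 : deriv f =ᶠ[nhds u] fun x => (α + 2) * β / α + C * x ^ α :=
        Filter.eventuallyEq_of_mem (isOpen_Ioi.mem_nhds hu) (fun x hx => derivf x hx)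
      rw [heq2.deriv_eq, ((hasDerivAt_rpow_cm C α hu0).const_add ((α + 2) * β / α)).deriv,
        derivf u hu]
      have e1 : u ^ (α-1) * u = u ^ α := by
        rw [← Real.rpow_add_one hu0.ne' (α-1)]; ring_nf
      field_simp
      linear_combination α * C * e1
    · intro u hu
      have hu0 : (0:ℝ) < u := hu
      have heq2 : deriv g =ᶠ[nhds u]
          fun x => β ^ 2 * (α + 1) / α ^ 2 + (β*C/α) * x ^ α + D * x ^ (2*α) :=
        Filter.eventuallyEq_of_mem (isOpen_Ioi.mem_nhds hu) (fun x hx => derivg x hx)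
      rw [heq2.deriv_eq,
        (((hasDerivAt_rpow_cm (β*C/α) α hu0).const_add (β ^ 2 * (α + 1) / α ^ 2)).fun_add
          (hasDerivAt_rpow_cm D (2*α) hu0)).deriv,
        derivg u hu, derivf u hu]
      have e1 : u ^ (α-1) * u = u ^ α := by
        rw [← Real.rpow_add_one hu0.ne' (α-1)]; ring_nf
      have e2 : u ^ (2*α-1) * u = u ^ (2*α) := by
        rw [← Real.rpow_add_one hu0.ne' (2*α-1)]; ring_nf
      field_simp
      linear_combination (norm := ring_nf) α*β*C*e1 + 2*α^2*D*e2
end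

section
/- Let h : ℝ → ℝ be smooth and nowhere vanishing, let φ, ψ : ℝ² → ℝ be smooth functions of (u,w), and set η(u,w) = e^{w}·h(u). Then the triple (φ, ψ, η) satisfies the integrability conditions if and only if there exist smooth functions f, g : ℝ → ℝ and constants c₁, c₂ ∈ ℝ such that ψ(u,w) = e^{w}·f(u) + c₁, φ(u,w) = e^{w}·g(u) + c₂, and the ordinary differential equations h'' = f' − g, h·g'' = 2f·g' − g·f' − g², h·f'' = 2h·g' − 2g·h' + f·f' − f·g hold identically on ℝ. -/

lemma pw_exp_mul0 (a : ℝ → ℝ) (p : ℝ × ℝ) :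
    pw (fun q => Real.exp q.2 * a q.1) p = Real.exp p.2 * a p.1 := by
  have : HasDerivAt (fun s => Real.exp s * a p.1) (Real.exp p.2 * a p.1) p.2 :=
    (Real.hasDerivAt_exp p.2).mul_const _
  simpa [pw] using this.deriv

lemma pu_exp_mul0 (a : ℝ → ℝ) (ha : Differentiable ℝ a) (p : ℝ × ℝ) :
    pu (fun q => Real.exp q.2 * a q.1) p = Real.exp p.2 * deriv a p.1 := by
  have : HasDerivAt (fun s => Real.exp p.2 * a s) (Real.exp p.2 * deriv a p.1) p.1 :=
    ((ha p.1).hasDerivAt).const_mul _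
  simpa [pu] using this.deriv

lemma pw_exp_mul (a : ℝ → ℝ) (c : ℝ) (p : ℝ × ℝ) :
    pw (fun q => Real.exp q.2 * a q.1 + c) p = Real.exp p.2 * a p.1 := by
  have : HasDerivAt (fun s => Real.exp s * a p.1 + c) (Real.exp p.2 * a p.1) p.2 :=
    ((Real.hasDerivAt_exp p.2).mul_const _).add_const c
  simpa [pw] using this.deriv

lemma pu_exp_mul (a : ℝ → ℝ) (ha : Differentiable ℝ a) (c : ℝ) (p : ℝ × ℝ) :
    pu (fun q => Real.exp q.2 * a q.1 + c) p = Real.exp p.2 * deriv a p.1 := by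
  have : HasDerivAt (fun s => Real.exp p.2 * a s + c) (Real.exp p.2 * deriv a p.1) p.1 :=
    (((ha p.1).hasDerivAt).const_mul _).add_const c
  simpa [pu] using this.deriv

lemma pw_eq_fderiv_s7 (f : ℝ × ℝ → ℝ) (hf : ContDiff ℝ (⊤ : ℕ∞) f) (p : ℝ × ℝ) :
    pw f p = fderiv ℝ f p ((0:ℝ), (1:ℝ)) := by
  have h1 : HasDerivAt (fun s : ℝ => ((p.1, s) : ℝ × ℝ)) ((0:ℝ), (1:ℝ)) p.2 :=
    (hasDerivAt_const _ _).prodMk (hasDerivAt_id _)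
  have := ((hf.differentiable (by simp)) p).hasFDerivAt.comp_hasDerivAt p.2 h1
  simpa [pw, Function.comp_def] using this.deriv

lemma contDiff_pw (f : ℝ × ℝ → ℝ) (hf : ContDiff ℝ (⊤ : ℕ∞) f) : ContDiff ℝ (⊤ : ℕ∞) (pw f) := by
  have : pw f = fun p => fderiv ℝ f p ((0:ℝ), (1:ℝ)) := funext (pw_eq_fderiv_s7 f hf)
  rw [this]
  exact (hf.fderiv_right (by simp)).clm_apply contDiff_const

lemma ode_exp {F : ℝ → ℝ} (hF : Differentiable ℝ F) (hd : ∀ x, deriv F x = F x) (x : ℝ) :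
    F x = Real.exp x * F 0 := by
  have hG : Differentiable ℝ (fun x => Real.exp (-x) * F x) :=
    (Real.differentiable_exp.comp differentiable_neg).mul hF
  have hd0 : ∀ x, deriv (fun x => Real.exp (-x) * F x) x = 0 := by
    intro x
    have h1 : HasDerivAt (fun x : ℝ => Real.exp (-x)) (Real.exp (-x) * (-1)) x :=
      (hasDerivAt_neg x).exp
    have := (h1.mul (hF x).hasDerivAt).deriv
    erw [this, hd x]; ring
  have hc := is_const_of_deriv_eq_zero hG hd0 x 0
  simp only [neg_zero, Real.exp_zero, one_mul] at hc
  have := congrArg (fun t => Real.exp x * t) hc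
  simpa [← mul_assoc, ← Real.exp_add] using this

lemma structure_lemma (χ : ℝ × ℝ → ℝ) (hχ : ContDiff ℝ (⊤ : ℕ∞) χ)
    (h3 : ∀ p : ℝ × ℝ, pw (pw χ) p = pw χ p)
    (h2 : ∀ p : ℝ × ℝ, pw (pu χ) p = pu χ p) :
    ∃ (a : ℝ → ℝ) (c : ℝ), ContDiff ℝ (⊤ : ℕ∞) a ∧
      (∀ p : ℝ × ℝ, χ p = Real.exp p.2 * a p.1 + c) ∧
      (∀ p : ℝ × ℝ, pw χ p = Real.exp p.2 * a p.1) ∧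
      (∀ p : ℝ × ℝ, pu χ p = Real.exp p.2 * deriv a p.1) := by
  have hpw := contDiff_pw χ hχ
  set a : ℝ → ℝ := fun u => pw χ (u, 0) with ha_def
  have ha : ContDiff ℝ (⊤ : ℕ∞) a := hpw.comp (contDiff_id.prodMk contDiff_const)
  have hslice : ∀ u : ℝ, Differentiable ℝ (fun s => pw χ (u, s)) := fun u =>
    (hpw.comp (contDiff_const.prodMk contDiff_id)).differentiable (by simp)
  have key : ∀ p : ℝ × ℝ, pw χ p = Real.exp p.2 * a p.1 := by
    intro p
    have := ode_exp (F := fun s => pw χ (p.1, s)) (hslice p.1)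
      (fun x => h3 (p.1, x)) p.2
    simpa [ha_def] using this
  have hχw : ∀ u : ℝ, Differentiable ℝ (fun s => χ (u, s)) := fun u =>
    (hχ.comp (contDiff_const.prodMk contDiff_id)).differentiable (by simp)
  set b : ℝ → ℝ := fun u => χ (u, 0) - a u with hb_def
  have hb : ContDiff ℝ (⊤ : ℕ∞) b := (hχ.comp (contDiff_id.prodMk contDiff_const)).sub ha
  have keyχ : ∀ p : ℝ × ℝ, χ p = Real.exp p.2 * a p.1 + b p.1 := by
    intro p
    have hK : Differentiable ℝ (fun s => χ (p.1, s) - Real.exp s * a p.1) :=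
      (hχw p.1).sub (Real.differentiable_exp.mul_const _)
    have hK0 : ∀ x, deriv (fun s => χ (p.1, s) - Real.exp s * a p.1) x = 0 := by
      intro x
      have h1 : HasDerivAt (fun s => χ (p.1, s)) (pw χ (p.1, x)) x :=
        ((hχw p.1) x).hasDerivAt
      have h2' : HasDerivAt (fun s => Real.exp s * a p.1) (Real.exp x * a p.1) x :=
        (Real.hasDerivAt_exp x).mul_const _
      erw [(h1.sub h2').deriv, key (p.1, x)]
      ring
    have hcon := is_const_of_deriv_eq_zero hK hK0 p.2 0
    simp only [Real.exp_zero, one_mul] at hcon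
    have : b p.1 = χ (p.1, 0) - a p.1 := rfl
    rw [this]
    have : χ p = χ (p.1, p.2) := rfl
    rw [this]
    linarith
  have keyu : ∀ p : ℝ × ℝ, pu χ p = Real.exp p.2 * deriv a p.1 + deriv b p.1 := by
    intro p
    have hfun : (fun s => χ (s, p.2)) = fun s => Real.exp p.2 * a s + b s := by
      funext s; exact keyχ (s, p.2)
    have hda : HasDerivAt (fun s => Real.exp p.2 * a s + b s)
        (Real.exp p.2 * deriv a p.1 + deriv b p.1) p.1 :=
      (((ha.differentiable (by simp) p.1).hasDerivAt).const_mul _).add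
        ((hb.differentiable (by simp) p.1).hasDerivAt)
    show deriv (fun s => χ (s, p.2)) p.1 = _
    rw [hfun]; exact hda.deriv
  have keywu : ∀ p : ℝ × ℝ, pw (pu χ) p = Real.exp p.2 * deriv a p.1 := by
    intro p
    have hfun : (fun s => pu χ (p.1, s)) = fun s => Real.exp s * deriv a p.1 + deriv b p.1 := by
      funext s; exact keyu (p.1, s)
    show deriv (fun s => pu χ (p.1, s)) p.2 = _
    rw [hfun]
    exact (((Real.hasDerivAt_exp p.2).mul_const _).add_const _).deriv
  have hb0 : ∀ u : ℝ, deriv b u = 0 := by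
    intro u
    have h2u := h2 (u, 0)
    rw [keywu (u, 0), keyu (u, 0)] at h2u
    linarith
  have hbconst : ∀ u : ℝ, b u = b 0 := fun u =>
    is_const_of_deriv_eq_zero (hb.differentiable (by simp)) hb0 u 0
  refine ⟨a, b 0, ha, ?_, key, ?_⟩
  · intro p; rw [keyχ p, hbconst p.1]
  · intro p; rw [keyu p, hb0 p.1, add_zero]

lemma contDiff_omega_deriv {f : ℝ → ℝ} (hf : ContDiff ℝ (⊤ : ℕ∞) f) : ContDiff ℝ (⊤ : ℕ∞) (deriv f) := by
  exact (contDiff_infty_iff_deriv.mp hf).2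

/-- Case 3 (η = e^w h(u)) of the classification: the integrability conditions hold iff
ψ = e^w f(u) + c₁, φ = e^w g(u) + c₂ with h'' = f' − g, h g'' = 2fg' − gf' − g² and
h f'' = 2hg' − 2gh' + ff' − fg. -/
theorem statement7
    (h : ℝ → ℝ) (hh : ContDiff ℝ (⊤ : ℕ∞) h) (hne : ∀ x : ℝ, h x ≠ 0)
    (φ ψ : ℝ × ℝ → ℝ) (hφ : ContDiff ℝ (⊤ : ℕ∞) φ) (hψ : ContDiff ℝ (⊤ : ℕ∞) ψ) :
    IntCond φ ψ (fun p => Real.exp p.2 * h p.1) Set.univ ↔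
    ∃ (f g : ℝ → ℝ) (c₁ c₂ : ℝ), ContDiff ℝ (⊤ : ℕ∞) f ∧ ContDiff ℝ (⊤ : ℕ∞) g ∧
      (∀ p : ℝ × ℝ, ψ p = Real.exp p.2 * f p.1 + c₁) ∧
      (∀ p : ℝ × ℝ, φ p = Real.exp p.2 * g p.1 + c₂) ∧
      (∀ x : ℝ, deriv (deriv h) x = deriv f x - g x) ∧
      (∀ x : ℝ, h x * deriv (deriv g) x =
        2 * f x * deriv g x - g x * deriv f x - (g x) ^ 2) ∧
      (∀ x : ℝ, h x * deriv (deriv f) x =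
        2 * h x * deriv g x - 2 * g x * deriv h x + f x * deriv f x - f x * g x) := by
  have hhd : Differentiable ℝ h := hh.differentiable (by simp)
  have hh2 : ContDiff ℝ (⊤ : ℕ∞) (deriv h) := contDiff_omega_deriv hh
  have hηne : ∀ p : ℝ × ℝ, Real.exp p.2 * h p.1 ≠ 0 := fun p =>
    mul_ne_zero (Real.exp_ne_zero _) (hne _)
  have pwη : ∀ p : ℝ × ℝ, pw (fun q : ℝ × ℝ => Real.exp q.2 * h q.1) p
      = Real.exp p.2 * h p.1 := pw_exp_mul0 h
  have puη : ∀ p : ℝ × ℝ, pu (fun q : ℝ × ℝ => Real.exp q.2 * h q.1) p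
      = Real.exp p.2 * deriv h p.1 := pu_exp_mul0 h hhd
  have puηf : pu (fun q : ℝ × ℝ => Real.exp q.2 * h q.1)
      = fun q : ℝ × ℝ => Real.exp q.2 * deriv h q.1 := funext puη
  constructor
  · intro H
    have c3 : ∀ p : ℝ × ℝ, pw (pw φ) p = pw φ p := by
      intro p
      have := (H p trivial).2.2.1
      rw [pwη p] at this
      exact mul_left_cancel₀ (hηne p) this
    have c2 : ∀ p : ℝ × ℝ, pw (pu φ) p = pu φ p := by
      intro p
      have := (H p trivial).2.1
      rw [pwη p] at this
      exact mul_left_cancel₀ (hηne p) this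
    have c6 : ∀ p : ℝ × ℝ, pw (pw ψ) p = pw ψ p := by
      intro p
      have := (H p trivial).2.2.2.2.2.1
      rw [pwη p] at this
      exact mul_left_cancel₀ (hηne p) this
    have c5 : ∀ p : ℝ × ℝ, pw (pu ψ) p = pu ψ p := by
      intro p
      have := (H p trivial).2.2.2.2.1
      rw [pwη p] at this
      exact mul_left_cancel₀ (hηne p) this
    obtain ⟨g, c₂, hg, hφeq, hpwφ, hpuφ⟩ := structure_lemma φ hφ c3 c2
    obtain ⟨f, c₁, hf, hψeq, hpwψ, hpuψ⟩ := structure_lemma ψ hψ c6 c5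
    have hg2 : Differentiable ℝ (deriv g) :=
      (contDiff_omega_deriv hg).differentiable (by simp)
    have hf2 : Differentiable ℝ (deriv f) :=
      (contDiff_omega_deriv hf).differentiable (by simp)
    have hh2d : Differentiable ℝ (deriv h) := hh2.differentiable (by simp)
    have hpupuφ : ∀ p : ℝ × ℝ, pu (pu φ) p = Real.exp p.2 * deriv (deriv g) p.1 := by
      intro p
      have : pu φ = fun q : ℝ × ℝ => Real.exp q.2 * deriv g q.1 := funext hpuφ
      rw [this]
      exact pu_exp_mul0 (deriv g) hg2 p
    have hpupuψ : ∀ p : ℝ × ℝ, pu (pu ψ) p = Real.exp p.2 * deriv (deriv f) p.1 := by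
      intro p
      have : pu ψ = fun q : ℝ × ℝ => Real.exp q.2 * deriv f q.1 := funext hpuψ
      rw [this]
      exact pu_exp_mul0 (deriv f) hf2 p
    have hpupuη : ∀ p : ℝ × ℝ, pu (pu (fun q : ℝ × ℝ => Real.exp q.2 * h q.1)) p
        = Real.exp p.2 * deriv (deriv h) p.1 := by
      intro p
      rw [puηf]
      exact pu_exp_mul0 (deriv h) hh2d p
    refine ⟨f, g, c₁, c₂, hf, hg, hψeq, hφeq, ?_, ?_, ?_⟩
    · intro x
      have H7 := (H (x, 0) trivial).2.2.2.2.2.2.1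
      rw [hpupuη (x, 0), pwη (x, 0), hpwφ (x, 0), hpuψ (x, 0)] at H7
      simp only [Real.exp_zero, one_mul] at H7
      have : h x * deriv (deriv h) x = h x * (deriv f x - g x) := by linear_combination H7
      exact mul_left_cancel₀ (hne x) this
    · intro x
      have H1 := (H (x, 0) trivial).1
      rw [hpupuφ (x, 0), hpwφ (x, 0), hpuψ (x, 0), hpwψ (x, 0), hpuφ (x, 0)] at H1
      simp only [Real.exp_zero, one_mul] at H1
      linear_combination H1
    · intro x
      have H4 := (H (x, 0) trivial).2.2.2.1
      rw [hpupuψ (x, 0), hpwφ (x, 0), hpuψ (x, 0), hpwψ (x, 0), puη (x, 0), pwη (x, 0),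
        hpuφ (x, 0)] at H4
      simp only [Real.exp_zero, one_mul] at H4
      linear_combination H4
  · rintro ⟨f, g, c₁, c₂, hf, hg, hψeq, hφeq, ode1, ode2, ode3⟩
    have hφ' : φ = fun p : ℝ × ℝ => Real.exp p.2 * g p.1 + c₂ := funext hφeq
    have hψ' : ψ = fun p : ℝ × ℝ => Real.exp p.2 * f p.1 + c₁ := funext hψeq
    subst hφ' hψ'
    have hgd : Differentiable ℝ g := hg.differentiable (by simp)
    have hfd : Differentiable ℝ f := hf.differentiable (by simp)
    have hg2 : Differentiable ℝ (deriv g) :=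
      (contDiff_omega_deriv hg).differentiable (by simp)
    have hf2 : Differentiable ℝ (deriv f) :=
      (contDiff_omega_deriv hf).differentiable (by simp)
    have hh2d : Differentiable ℝ (deriv h) := hh2.differentiable (by simp)
    have e1 : pu (fun q : ℝ × ℝ => Real.exp q.2 * g q.1 + c₂)
        = fun q : ℝ × ℝ => Real.exp q.2 * deriv g q.1 := funext (pu_exp_mul g hgd c₂)
    have e2 : pw (fun q : ℝ × ℝ => Real.exp q.2 * g q.1 + c₂)
        = fun q : ℝ × ℝ => Real.exp q.2 * g q.1 := funext (pw_exp_mul g c₂)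
    have e3 : pu (fun q : ℝ × ℝ => Real.exp q.2 * f q.1 + c₁)
        = fun q : ℝ × ℝ => Real.exp q.2 * deriv f q.1 := funext (pu_exp_mul f hfd c₁)
    have e4 : pw (fun q : ℝ × ℝ => Real.exp q.2 * f q.1 + c₁)
        = fun q : ℝ × ℝ => Real.exp q.2 * f q.1 := funext (pw_exp_mul f c₁)
    have e5 : pu (fun q : ℝ × ℝ => Real.exp q.2 * h q.1)
        = fun q : ℝ × ℝ => Real.exp q.2 * deriv h q.1 := puηf
    have e6 : pw (fun q : ℝ × ℝ => Real.exp q.2 * h q.1)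
        = fun q : ℝ × ℝ => Real.exp q.2 * h q.1 := funext pwη
    have e11 : pu (fun q : ℝ × ℝ => Real.exp q.2 * deriv g q.1)
        = fun q : ℝ × ℝ => Real.exp q.2 * deriv (deriv g) q.1 :=
      funext (pu_exp_mul0 (deriv g) hg2)
    have e12 : pw (fun q : ℝ × ℝ => Real.exp q.2 * deriv g q.1)
        = fun q : ℝ × ℝ => Real.exp q.2 * deriv g q.1 := funext (pw_exp_mul0 (deriv g))
    have e13 : pw (fun q : ℝ × ℝ => Real.exp q.2 * g q.1)
        = fun q : ℝ × ℝ => Real.exp q.2 * g q.1 := funext (pw_exp_mul0 g)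
    have e14 : pu (fun q : ℝ × ℝ => Real.exp q.2 * deriv f q.1)
        = fun q : ℝ × ℝ => Real.exp q.2 * deriv (deriv f) q.1 :=
      funext (pu_exp_mul0 (deriv f) hf2)
    have e15 : pw (fun q : ℝ × ℝ => Real.exp q.2 * deriv f q.1)
        = fun q : ℝ × ℝ => Real.exp q.2 * deriv f q.1 := funext (pw_exp_mul0 (deriv f))
    have e16 : pw (fun q : ℝ × ℝ => Real.exp q.2 * f q.1)
        = fun q : ℝ × ℝ => Real.exp q.2 * f q.1 := funext (pw_exp_mul0 f)
    have e17 : pu (fun q : ℝ × ℝ => Real.exp q.2 * deriv h q.1)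
        = fun q : ℝ × ℝ => Real.exp q.2 * deriv (deriv h) q.1 :=
      funext (pu_exp_mul0 (deriv h) hh2d)
    have e18 : pw (fun q : ℝ × ℝ => Real.exp q.2 * deriv h q.1)
        = fun q : ℝ × ℝ => Real.exp q.2 * deriv h q.1 := funext (pw_exp_mul0 (deriv h))
    intro p _
    refine ⟨?_, ?_, ?_, ?_, ?_, ?_, ?_, ?_, ?_⟩
    · rw [e1, e11, e2, e3, e4]
      simp only
      linear_combination (Real.exp p.2 * Real.exp p.2) * ode2 p.1
    · rw [e1, e12, e6]
    · rw [e2, e13, e6]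
    · rw [e3, e14, e2, e4, e5, e6, e1]
      simp only
      linear_combination (Real.exp p.2 * Real.exp p.2) * ode3 p.1
    · rw [e3, e15, e6]
    · rw [e4, e16, e6]
    · rw [e5, e17, e6, e2, e3]
      simp only
      linear_combination (Real.exp p.2 * Real.exp p.2 * h p.1) * ode1 p.1
    · rw [e5, e18, e6]
    · rw [e6, e6]
      simp only
      ring
end

section
/- Let ε ≠ 0 be a real constant, U ⊆ ℝ³ an open connected set, and u, w : U → ℝ smooth functions with u > 0 and w_x = u_y on U. Assume that for every point p ∈ U, every N ∈ ℕ, and all real numbers a₀, …, a_N, there exists a smooth function ψ defined on a neighbourhood of p in U which satisfies, at every point of that neighbourhood, both equations (ε/u²)ψ_xx + (1/√3)ψ_y = 0 and ψ_t = (4ε²/u³)ψ_xxx + (2√3 ε w/u² − 6ε² u_x/u⁴)ψ_xx, and such that ∂_x^j ψ(p) = a_j for j = 0, …, N. Then u satisfies the Harry Dym equation u_t = −2w u_y + u w_y − (ε²/u)·(1/u)_xxx at every point of U. -/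
/-- Partial derivative in the first (x) coordinate of a function on ℝ³ = ℝ × ℝ × ℝ. -/
noncomputable def px (f : ℝ × ℝ × ℝ → ℝ) : ℝ × ℝ × ℝ → ℝ :=
  fun p => deriv (fun s => f (s, p.2.1, p.2.2)) p.1

/-- Partial derivative in the second (y) coordinate. -/
noncomputable def py (f : ℝ × ℝ × ℝ → ℝ) : ℝ × ℝ × ℝ → ℝ :=
  fun p => deriv (fun s => f (p.1, s, p.2.2)) p.2.1

/-- Partial derivative in the third (t) coordinate. -/
noncomputable def pt (f : ℝ × ℝ × ℝ → ℝ) : ℝ × ℝ × ℝ → ℝ :=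
  fun p => deriv (fun s => f (p.1, p.2.1, s)) p.2.2

abbrev E3 : Type := ℝ × ℝ × ℝ

/-- directional partial derivative -/
noncomputable def pd (v : E3) (f : E3 → ℝ) : E3 → ℝ := fun p => fderiv ℝ f p v

def vx : E3 := (1, 0, 0)
def vy : E3 := (0, 1, 0)
def vt : E3 := (0, 0, 1)

lemma diffAt_of_contDiffOn {f : E3 → ℝ} {V : Set E3} (hV : IsOpen V)
    (hf : ContDiffOn ℝ (⊤ : ℕ∞) f V) {q : E3} (hq : q ∈ V) : DifferentiableAt ℝ f q :=
  (hf.contDiffAt (hV.mem_nhds hq)).differentiableAt (by simp)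

lemma px_eq_pd {f : E3 → ℝ} {q : E3} (h : DifferentiableAt ℝ f q) :
    px f q = pd vx f q := by
  have hL : HasDerivAt (fun s : ℝ => ((s, q.2.1, q.2.2) : E3)) vx q.1 :=
    (hasDerivAt_id q.1).prodMk (hasDerivAt_const _ _ |>.prodMk (hasDerivAt_const _ _))
  have h' : HasFDerivAt f (fderiv ℝ f q) ((q.1, q.2.1, q.2.2) : E3) := by
    simpa using h.hasFDerivAt
  exact (h'.comp_hasDerivAt q.1 hL).deriv

lemma py_eq_pd {f : E3 → ℝ} {q : E3} (h : DifferentiableAt ℝ f q) :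
    py f q = pd vy f q := by
  have hL : HasDerivAt (fun s : ℝ => ((q.1, s, q.2.2) : E3)) vy q.2.1 :=
    (hasDerivAt_const _ _).prodMk ((hasDerivAt_id q.2.1).prodMk (hasDerivAt_const _ _))
  have h' : HasFDerivAt f (fderiv ℝ f q) ((q.1, q.2.1, q.2.2) : E3) := by
    simpa using h.hasFDerivAt
  exact (h'.comp_hasDerivAt q.2.1 hL).deriv

lemma pt_eq_pd {f : E3 → ℝ} {q : E3} (h : DifferentiableAt ℝ f q) :
    pt f q = pd vt f q := by
  have hL : HasDerivAt (fun s : ℝ => ((q.1, q.2.1, s) : E3)) vt q.2.2 :=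
    (hasDerivAt_const _ _).prodMk ((hasDerivAt_const _ _).prodMk (hasDerivAt_id q.2.2))
  have h' : HasFDerivAt f (fderiv ℝ f q) ((q.1, q.2.1, q.2.2) : E3) := by
    simpa using h.hasFDerivAt
  exact (h'.comp_hasDerivAt q.2.2 hL).deriv

lemma pd_congr {f g : E3 → ℝ} {V : Set E3} (hV : IsOpen V)
    (h : ∀ q ∈ V, f q = g q) {q : E3} (hq : q ∈ V) (v : E3) :
    pd v f q = pd v g q := by
  have : f =ᶠ[nhds q] g := Filter.eventuallyEq_of_mem (hV.mem_nhds hq) h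
  simp only [pd, this.fderiv_eq]

lemma px_congr {f g : E3 → ℝ} {V : Set E3} (hV : IsOpen V)
    (h : ∀ q ∈ V, f q = g q) {q : E3} (hq : q ∈ V) :
    px f q = px g q := by
  have hc : Continuous (fun s : ℝ => ((s, q.2.1, q.2.2) : E3)) := by fun_prop
  have hev : ∀ᶠ s in nhds q.1, ((s, q.2.1, q.2.2) : E3) ∈ V := by
    apply hc.continuousAt.eventually_mem
    exact hV.mem_nhds (by simpa using hq)
  have : (fun s : ℝ => f (s, q.2.1, q.2.2)) =ᶠ[nhds q.1]
      (fun s : ℝ => g (s, q.2.1, q.2.2)) := hev.mono fun s hs => h _ hs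
  exact this.deriv_eq

lemma pd_contDiffOn {f : E3 → ℝ} {V : Set E3} (hV : IsOpen V)
    (hf : ContDiffOn ℝ (⊤ : ℕ∞) f V) (v : E3) : ContDiffOn ℝ (⊤ : ℕ∞) (pd v f) V := by
  have h1 : ContDiffOn ℝ (⊤ : ℕ∞) (fderivWithin ℝ f V) V :=
    hf.fderivWithin hV.uniqueDiffOn (by simp)
  have h2 := ((ContinuousLinearMap.apply ℝ ℝ v).contDiff (n := ((⊤ : ℕ∞) : WithTop ℕ∞))).comp_contDiffOn h1
  exact h2.congr fun q hq => by
    simp [pd, fderivWithin_of_isOpen hV hq]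

lemma pd_comm {f : E3 → ℝ} {V : Set E3} (hV : IsOpen V)
    (hf : ContDiffOn ℝ (⊤ : ℕ∞) f V) {q : E3} (hq : q ∈ V) (v w : E3) :
    pd v (pd w f) q = pd w (pd v f) q := by
  have hfd : DifferentiableAt ℝ (fderiv ℝ f) q := by
    have := (hf.contDiffAt (hV.mem_nhds hq)).fderiv_right (m := 1) (WithTop.coe_le_coe.mpr le_top)
    exact this.differentiableAt (by simp)
  have hsymm : IsSymmSndFDerivAt ℝ f q :=
    (hf.contDiffAt (hV.mem_nhds hq)).isSymmSndFDerivAt (by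
      rw [minSmoothness_of_isRCLikeNormedField]; exact WithTop.coe_le_coe.mpr le_top)
  have key : ∀ a b : E3, pd a (pd b f) q = fderiv ℝ (fderiv ℝ f) q a b := by
    intro a b
    have hc : HasFDerivAt (fun p => (ContinuousLinearMap.apply ℝ ℝ b) (fderiv ℝ f p))
        ((ContinuousLinearMap.apply ℝ ℝ b).comp (fderiv ℝ (fderiv ℝ f) q)) q :=
      ((ContinuousLinearMap.apply ℝ ℝ b).hasFDerivAt).comp q hfd.hasFDerivAt
    have : pd b f = fun p => (ContinuousLinearMap.apply ℝ ℝ b) (fderiv ℝ f p) := rfl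
    rw [pd, this, hc.fderiv]
    rfl
  rw [key v w, key w v, hsymm.eq]

lemma pd_add {f g : E3 → ℝ} {q : E3} (hf : DifferentiableAt ℝ f q)
    (hg : DifferentiableAt ℝ g q) (v : E3) :
    pd v (fun p => f p + g p) q = pd v f q + pd v g q := by
  simp [pd, fderiv_fun_add (𝕜 := ℝ) hf hg]

lemma pd_mul {f g : E3 → ℝ} {q : E3} (hf : DifferentiableAt ℝ f q)
    (hg : DifferentiableAt ℝ g q) (v : E3) :
    pd v (fun p => f p * g p) q = pd v f q * g q + f q * pd v g q := by
  simp [pd, fderiv_fun_mul (𝕜 := ℝ) hf hg]; ring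

lemma pd_const_mul {f : E3 → ℝ} {q : E3} (hf : DifferentiableAt ℝ f q) (c : ℝ) (v : E3) :
    pd v (fun p => c * f p) q = c * pd v f q := by
  simp [pd, fderiv_const_mul (𝕜 := ℝ) hf c]

lemma pd_const (c : ℝ) (q v : E3) : pd v (fun _ => c) q = 0 := by
  simp [pd]

lemma pd_smul_mul {f g : E3 → ℝ} {q : E3} (hf : DifferentiableAt ℝ f q)
    (hg : DifferentiableAt ℝ g q) (c : ℝ) (v : E3) :
    pd v (fun p => c * (f p * g p)) q = c * (pd v f q * g q + f q * pd v g q) := by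
  rw [pd_const_mul (hf.fun_mul hg) c v, pd_mul hf hg v]

lemma pd_mul2 {f₁ g₁ f₂ g₂ : E3 → ℝ} {q : E3} (hf₁ : DifferentiableAt ℝ f₁ q)
    (hg₁ : DifferentiableAt ℝ g₁ q) (hf₂ : DifferentiableAt ℝ f₂ q)
    (hg₂ : DifferentiableAt ℝ g₂ q) (v : E3) :
    pd v (fun p => f₁ p * g₁ p + f₂ p * g₂ p) q =
      (pd v f₁ q * g₁ q + f₁ q * pd v g₁ q) + (pd v f₂ q * g₂ q + f₂ q * pd v g₂ q) := by
  rw [pd_add (hf₁.fun_mul hg₁) (hf₂.fun_mul hg₂) v, pd_mul hf₁ hg₁ v, pd_mul hf₂ hg₂ v]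

lemma pd_smul_mul2 {f₁ g₁ f₂ g₂ : E3 → ℝ} {q : E3} (hf₁ : DifferentiableAt ℝ f₁ q)
    (hg₁ : DifferentiableAt ℝ g₁ q) (hf₂ : DifferentiableAt ℝ f₂ q)
    (hg₂ : DifferentiableAt ℝ g₂ q) (c : ℝ) (v : E3) :
    pd v (fun p => c * (f₁ p * g₁ p + f₂ p * g₂ p)) q =
      c * ((pd v f₁ q * g₁ q + f₁ q * pd v g₁ q) + (pd v f₂ q * g₂ q + f₂ q * pd v g₂ q)) := by
  rw [pd_const_mul ((hf₁.fun_mul hg₁).fun_add (hf₂.fun_mul hg₂)) c v, pd_mul2 hf₁ hg₁ hf₂ hg₂ v]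

lemma pd_mul4 {f₁ g₁ f₂ g₂ f₃ g₃ f₄ g₄ : E3 → ℝ} {q : E3}
    (hf₁ : DifferentiableAt ℝ f₁ q) (hg₁ : DifferentiableAt ℝ g₁ q)
    (hf₂ : DifferentiableAt ℝ f₂ q) (hg₂ : DifferentiableAt ℝ g₂ q)
    (hf₃ : DifferentiableAt ℝ f₃ q) (hg₃ : DifferentiableAt ℝ g₃ q)
    (hf₄ : DifferentiableAt ℝ f₄ q) (hg₄ : DifferentiableAt ℝ g₄ q) (v : E3) :
    pd v (fun p => (f₁ p * g₁ p + f₂ p * g₂ p) + (f₃ p * g₃ p + f₄ p * g₄ p)) q =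
      ((pd v f₁ q * g₁ q + f₁ q * pd v g₁ q) + (pd v f₂ q * g₂ q + f₂ q * pd v g₂ q)) +
      ((pd v f₃ q * g₃ q + f₃ q * pd v g₃ q) + (pd v f₄ q * g₄ q + f₄ q * pd v g₄ q)) := by
  rw [pd_add ((hf₁.fun_mul hg₁).fun_add (hf₂.fun_mul hg₂)) ((hf₃.fun_mul hg₃).fun_add (hf₄.fun_mul hg₄)) v,
    pd_mul2 hf₁ hg₁ hf₂ hg₂ v, pd_mul2 hf₃ hg₃ hf₄ hg₄ v]

lemma pd_smul_mul4 {f₁ g₁ f₂ g₂ f₃ g₃ f₄ g₄ : E3 → ℝ} {q : E3}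
    (hf₁ : DifferentiableAt ℝ f₁ q) (hg₁ : DifferentiableAt ℝ g₁ q)
    (hf₂ : DifferentiableAt ℝ f₂ q) (hg₂ : DifferentiableAt ℝ g₂ q)
    (hf₃ : DifferentiableAt ℝ f₃ q) (hg₃ : DifferentiableAt ℝ g₃ q)
    (hf₄ : DifferentiableAt ℝ f₄ q) (hg₄ : DifferentiableAt ℝ g₄ q) (c : ℝ) (v : E3) :
    pd v (fun p => c * ((f₁ p * g₁ p + f₂ p * g₂ p) + (f₃ p * g₃ p + f₄ p * g₄ p))) q =
      c * (((pd v f₁ q * g₁ q + f₁ q * pd v g₁ q) + (pd v f₂ q * g₂ q + f₂ q * pd v g₂ q)) +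
      ((pd v f₃ q * g₃ q + f₃ q * pd v g₃ q) + (pd v f₄ q * g₄ q + f₄ q * pd v g₄ q))) := by
  rw [pd_const_mul (((hf₁.fun_mul hg₁).fun_add (hf₂.fun_mul hg₂)).fun_add ((hf₃.fun_mul hg₃).fun_add (hf₄.fun_mul hg₄))) c v,
    pd_mul4 hf₁ hg₁ hf₂ hg₂ hf₃ hg₃ hf₄ hg₄ v]

lemma pd_two_smul_mul {f₁ g₁ f₂ g₂ : E3 → ℝ} {q : E3} (hf₁ : DifferentiableAt ℝ f₁ q)
    (hg₁ : DifferentiableAt ℝ g₁ q) (hf₂ : DifferentiableAt ℝ f₂ q)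
    (hg₂ : DifferentiableAt ℝ g₂ q) (c₁ c₂ : ℝ) (v : E3) :
    pd v (fun p => c₁ * (f₁ p * g₁ p) + c₂ * (f₂ p * g₂ p)) q =
      c₁ * (pd v f₁ q * g₁ q + f₁ q * pd v g₁ q) + c₂ * (pd v f₂ q * g₂ q + f₂ q * pd v g₂ q) := by
  rw [pd_add ((hf₁.fun_mul hg₁).const_mul c₁) ((hf₂.fun_mul hg₂).const_mul c₂) v,
    pd_smul_mul hf₁ hg₁ c₁ v, pd_smul_mul hf₂ hg₂ c₂ v]

lemma pd_two_smul_mul2 {f₁ g₁ f₂ g₂ f₃ g₃ f₄ g₄ : E3 → ℝ} {q : E3}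
    (hf₁ : DifferentiableAt ℝ f₁ q) (hg₁ : DifferentiableAt ℝ g₁ q)
    (hf₂ : DifferentiableAt ℝ f₂ q) (hg₂ : DifferentiableAt ℝ g₂ q)
    (hf₃ : DifferentiableAt ℝ f₃ q) (hg₃ : DifferentiableAt ℝ g₃ q)
    (hf₄ : DifferentiableAt ℝ f₄ q) (hg₄ : DifferentiableAt ℝ g₄ q) (c₁ c₂ : ℝ) (v : E3) :
    pd v (fun p => c₁ * (f₁ p * g₁ p + f₂ p * g₂ p) + c₂ * (f₃ p * g₃ p + f₄ p * g₄ p)) q =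
      c₁ * ((pd v f₁ q * g₁ q + f₁ q * pd v g₁ q) + (pd v f₂ q * g₂ q + f₂ q * pd v g₂ q)) +
      c₂ * ((pd v f₃ q * g₃ q + f₃ q * pd v g₃ q) + (pd v f₄ q * g₄ q + f₄ q * pd v g₄ q)) := by
  rw [pd_add (((hf₁.fun_mul hg₁).fun_add (hf₂.fun_mul hg₂)).const_mul c₁)
    (((hf₃.fun_mul hg₃).fun_add (hf₄.fun_mul hg₄)).const_mul c₂) v,
    pd_smul_mul2 hf₁ hg₁ hf₂ hg₂ c₁ v, pd_smul_mul2 hf₃ hg₃ hf₄ hg₄ c₂ v]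

lemma pd_neg_mul {f g : E3 → ℝ} {q : E3} (hf : DifferentiableAt ℝ f q)
    (hg : DifferentiableAt ℝ g q) (v : E3) :
    pd v (fun p => -(f p * g p)) q = -(pd v f q * g q + f q * pd v g q) := by
  have h : (fun p => -(f p * g p)) = fun p => (-1 : ℝ) * (f p * g p) := by
    funext r; ring
  rw [h, pd_smul_mul hf hg (-1) v]; ring

/-- Compatibility of the Lax pair (ε/u²)ψ_xx + (1/√3)ψ_y = 0,
ψ_t = (4ε²/u³)ψ_xxx + (2√3εw/u² − 6ε²u_x/u⁴)ψ_xx forces the Harry Dym equation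
u_t = −2wu_y + uw_y − (ε²/u)(1/u)_xxx. -/
theorem statement11
    (ε : ℝ) (hε : ε ≠ 0)
    (U : Set (ℝ × ℝ × ℝ)) (hU : IsOpen U) (hUconn : IsConnected U)
    (u w : ℝ × ℝ × ℝ → ℝ)
    (hu : ContDiffOn ℝ (⊤ : ℕ∞) u U) (hw : ContDiffOn ℝ (⊤ : ℕ∞) w U)
    (hupos : ∀ p ∈ U, 0 < u p)
    (hwx : ∀ p ∈ U, px w p = py u p)
    (hLax : ∀ p ∈ U, ∀ N : ℕ, ∀ a : ℕ → ℝ,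
      ∃ V : Set (ℝ × ℝ × ℝ), IsOpen V ∧ p ∈ V ∧ V ⊆ U ∧
        ∃ ψ : ℝ × ℝ × ℝ → ℝ, ContDiffOn ℝ (⊤ : ℕ∞) ψ V ∧
          (∀ q ∈ V, (ε / (u q) ^ 2) * px (px ψ) q + (1 / Real.sqrt 3) * py ψ q = 0) ∧
          (∀ q ∈ V, pt ψ q = (4 * ε ^ 2 / (u q) ^ 3) * (px^[3] ψ) q
            + (2 * Real.sqrt 3 * ε * w q / (u q) ^ 2
              - 6 * ε ^ 2 * px u q / (u q) ^ 4) * px (px ψ) q) ∧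
          (∀ j ≤ N, (px^[j] ψ) p = a j)) :
    ∀ p ∈ U, pt u p = -2 * w p * py u p + u p * py w p
      - (ε ^ 2 / u p) * (px^[3] (fun q => 1 / u q)) p := by
  intro p hp
  set s : ℝ := Real.sqrt 3 with hsdef
  have hs0 : s ≠ 0 := by rw [hsdef]; positivity
  have hs3 : s ^ 2 = 3 := Real.sq_sqrt (by norm_num)
  have hu0 : ∀ q ∈ U, u q ≠ 0 := fun q hq => ne_of_gt (hupos q hq)
  set D : E3 → ℝ := fun q => 1 / u q with hDdef
  have hDs : ContDiffOn ℝ (⊤ : ℕ∞) D U := by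
    rw [hDdef]; simpa [one_div] using hu.fun_inv hu0
  have dU : ∀ {f : E3 → ℝ}, ContDiffOn ℝ (⊤ : ℕ∞) f U → ∀ {q : E3}, q ∈ U →
      DifferentiableAt ℝ f q := fun {f} hf {q} hq => diffAt_of_contDiffOn hU hf hq
  set m2 : E3 → ℝ := fun q => D q * D q with hm2def
  have hm2s : ContDiffOn ℝ (⊤ : ℕ∞) m2 U := by rw [hm2def]; exact hDs.mul hDs
  set A : E3 → ℝ := fun q => ε * m2 q with hAdef
  have hAs : ContDiffOn ℝ (⊤ : ℕ∞) A U := by rw [hAdef]; exact contDiffOn_const.mul hm2s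
  have hDxs : ContDiffOn ℝ (⊤ : ℕ∞) (pd vx D) U := pd_contDiffOn hU hDs vx
  have hDxxs : ContDiffOn ℝ (⊤ : ℕ∞) (pd vx (pd vx D)) U := pd_contDiffOn hU hDxs vx
  have hDys : ContDiffOn ℝ (⊤ : ℕ∞) (pd vy D) U := pd_contDiffOn hU hDs vy
  have hm2xs : ContDiffOn ℝ (⊤ : ℕ∞) (pd vx m2) U := pd_contDiffOn hU hm2s vx
  have hm2xxs : ContDiffOn ℝ (⊤ : ℕ∞) (pd vx (pd vx m2)) U := pd_contDiffOn hU hm2xs vx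
  have hAxs : ContDiffOn ℝ (⊤ : ℕ∞) (pd vx A) U := pd_contDiffOn hU hAs vx
  have hAxxs : ContDiffOn ℝ (⊤ : ℕ∞) (pd vx (pd vx A)) U := pd_contDiffOn hU hAxs vx
  have hw1s : ContDiffOn ℝ (⊤ : ℕ∞) (pd vx w) U := pd_contDiffOn hU hw vx
  set B : E3 → ℝ := fun q => 4 * ε ^ 2 * (D q * m2 q) with hBdef
  have hBs : ContDiffOn ℝ (⊤ : ℕ∞) B U := by rw [hBdef]; exact contDiffOn_const.mul (hDs.mul hm2s)
  set C : E3 → ℝ := fun q => 2 * s * ε * (w q * m2 q) + 6 * ε ^ 2 * (m2 q * pd vx D q)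
    with hCdef
  have hCs : ContDiffOn ℝ (⊤ : ℕ∞) C U := by
    rw [hCdef]
    exact (contDiffOn_const.mul (hw.mul hm2s)).add (contDiffOn_const.mul (hm2s.mul hDxs))
  have hBxs : ContDiffOn ℝ (⊤ : ℕ∞) (pd vx B) U := pd_contDiffOn hU hBs vx
  have hCxs : ContDiffOn ℝ (⊤ : ℕ∞) (pd vx C) U := pd_contDiffOn hU hCs vx
  -- the relation u * D = 1
  have hud : ∀ v : E3, ∀ q ∈ U, pd v u q * D q + u q * pd v D q = 0 := by
    intro v q hq
    have h1 : pd v (fun r => u r * D r) q = pd v u q * D q + u q * pd v D q :=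
      pd_mul (dU hu hq) (dU hDs hq) v
    have h2 : pd v (fun r => u r * D r) q = pd v (fun _ => (1 : ℝ)) q :=
      pd_congr hU (fun r hr => by simp only [hDdef]; field_simp [hu0 r hr]) hq v
    rw [h1, pd_const] at h2
    exact h2
  have huD : ∀ q ∈ U, u q * D q = 1 := by
    intro q hq; simp only [hDdef]; field_simp [hu0 q hq]
  have hpdyu : ∀ q ∈ U, pd vy u q = pd vx w q := by
    intro q hq
    rw [← py_eq_pd (dU hu hq), ← px_eq_pd (dU hw hq)]
    exact (hwx q hq).symm
  have hDyval : ∀ q ∈ U, pd vy D q = -(pd vx w q * m2 q) := by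
    intro q hq
    have h := hud vy q hq
    rw [hpdyu q hq] at h
    have hm2q : m2 q = D q * D q := by rw [hm2def]
    linear_combination (D q) * h - pd vy D q * huD q hq + pd vx w q * hm2q
  have hpxu : ∀ q ∈ U, px u q = -((u q) ^ 2 * pd vx D q) := by
    intro q hq
    rw [px_eq_pd (dU hu hq)]
    have h := hud vx q hq
    linear_combination (u q) * h - pd vx u q * huD q hq
  -- coefficient value identities
  have hm2x : ∀ q ∈ U, pd vx m2 q = pd vx D q * D q + D q * pd vx D q := by
    intro q hq
    rw [hm2def]
    exact pd_mul (dU hDs hq) (dU hDs hq) vx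
  have hm2tp : pd vt m2 p = pd vt D p * D p + D p * pd vt D p := by
    rw [hm2def]; exact pd_mul (dU hDs hp) (dU hDs hp) vt
  have hm2yp : pd vy m2 p = pd vy D p * D p + D p * pd vy D p := by
    rw [hm2def]; exact pd_mul (dU hDs hp) (dU hDs hp) vy
  have hm2xx : ∀ q ∈ U, pd vx (pd vx m2) q =
      (pd vx (pd vx D) q * D q + pd vx D q * pd vx D q) +
      (pd vx D q * pd vx D q + D q * pd vx (pd vx D) q) := by
    intro q hq
    rw [pd_congr hU hm2x hq vx]
    exact pd_mul2 (dU hDxs hq) (dU hDs hq) (dU hDs hq) (dU hDxs hq) vx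
  have hm2xxxp : pd vx (pd vx (pd vx m2)) p =
      ((pd vx (pd vx (pd vx D)) p * D p + pd vx (pd vx D) p * pd vx D p) +
       (pd vx (pd vx D) p * pd vx D p + pd vx D p * pd vx (pd vx D) p)) +
      ((pd vx (pd vx D) p * pd vx D p + pd vx D p * pd vx (pd vx D) p) +
       (pd vx D p * pd vx (pd vx D) p + D p * pd vx (pd vx (pd vx D)) p)) := by
    rw [pd_congr hU hm2xx hp vx]
    exact pd_mul4 (dU hDxxs hp) (dU hDs hp) (dU hDxs hp) (dU hDxs hp)
      (dU hDxs hp) (dU hDxs hp) (dU hDs hp) (dU hDxxs hp) vx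
  have hAx : ∀ q ∈ U, pd vx A q = ε * pd vx m2 q := by
    intro q hq
    rw [hAdef]
    exact pd_const_mul (dU hm2s hq) ε vx
  have hAxx : ∀ q ∈ U, pd vx (pd vx A) q = ε * pd vx (pd vx m2) q := by
    intro q hq
    rw [pd_congr hU hAx hq vx]
    exact pd_const_mul (dU hm2xs hq) ε vx
  have hAxxxp : pd vx (pd vx (pd vx A)) p = ε * pd vx (pd vx (pd vx m2)) p := by
    rw [pd_congr hU hAxx hp vx]
    exact pd_const_mul (dU hm2xxs hp) ε vx
  have hAtp : pd vt A p = ε * pd vt m2 p := by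
    rw [hAdef]
    exact pd_const_mul (dU hm2s hp) ε vt
  have hCx : ∀ q ∈ U, pd vx C q =
      2 * s * ε * (pd vx w q * m2 q + w q * pd vx m2 q) +
      6 * ε ^ 2 * (pd vx m2 q * pd vx D q + m2 q * pd vx (pd vx D) q) := by
    intro q hq
    rw [hCdef]
    exact pd_two_smul_mul (dU hw hq) (dU hm2s hq) (dU hm2s hq) (dU hDxs hq)
      (2 * s * ε) (6 * ε ^ 2) vx
  have hCyp : pd vy C p =
      2 * s * ε * (pd vy w p * m2 p + w p * pd vy m2 p) +
      6 * ε ^ 2 * (pd vy m2 p * pd vx D p + m2 p * pd vy (pd vx D) p) := by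
    rw [hCdef]
    exact pd_two_smul_mul (dU hw hp) (dU hm2s hp) (dU hm2s hp) (dU hDxs hp)
      (2 * s * ε) (6 * ε ^ 2) vy
  have hpdyDx : pd vy (pd vx D) p = pd vx (pd vy D) p := pd_comm hU hDs hp vy vx
  have hpdxDy : pd vx (pd vy D) p =
      -(pd vx (pd vx w) p * m2 p + pd vx w p * pd vx m2 p) := by
    rw [pd_congr hU hDyval hp vx]
    exact pd_neg_mul (dU hw1s hp) (dU hm2s hp) vx
  have hCxxp : pd vx (pd vx C) p =
      2 * s * ε * ((pd vx (pd vx w) p * m2 p + pd vx w p * pd vx m2 p) +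
        (pd vx w p * pd vx m2 p + w p * pd vx (pd vx m2) p)) +
      6 * ε ^ 2 * ((pd vx (pd vx m2) p * pd vx D p + pd vx m2 p * pd vx (pd vx D) p) +
        (pd vx m2 p * pd vx (pd vx D) p + m2 p * pd vx (pd vx (pd vx D)) p)) := by
    rw [pd_congr hU hCx hp vx]
    exact pd_two_smul_mul2 (dU hw1s hp) (dU hm2s hp) (dU hw hp) (dU hm2xs hp)
      (dU hm2xs hp) (dU hDxs hp) (dU hm2s hp) (dU hDxxs hp)
      (2 * s * ε) (6 * ε ^ 2) vx
  -- obtain the wave function with prescribed 5-jet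
  obtain ⟨V, hVo, hpV, hVU, ψ, hψ, heq1, heq2, hjet⟩ :=
    hLax p hp 5 (fun j => if j = 2 then 1 else 0)
  have dV : ∀ {f : E3 → ℝ}, ContDiffOn ℝ (⊤ : ℕ∞) f V → ∀ {q : E3}, q ∈ V →
      DifferentiableAt ℝ f q := fun {f} hf {q} hq => diffAt_of_contDiffOn hVo hf hq
  have hψ1s : ContDiffOn ℝ (⊤ : ℕ∞) (pd vx ψ) V := pd_contDiffOn hVo hψ vx
  have hψ2s : ContDiffOn ℝ (⊤ : ℕ∞) (pd vx (pd vx ψ)) V := pd_contDiffOn hVo hψ1s vx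
  have hψ3s : ContDiffOn ℝ (⊤ : ℕ∞) (pd vx (pd vx (pd vx ψ))) V := pd_contDiffOn hVo hψ2s vx
  have hψ4s : ContDiffOn ℝ (⊤ : ℕ∞) (pd vx (pd vx (pd vx (pd vx ψ)))) V := pd_contDiffOn hVo hψ3s vx
  -- conversion of iterated px to pd vx on V
  have hpx1 : ∀ q ∈ V, px ψ q = pd vx ψ q := fun q hq => px_eq_pd (dV hψ hq)
  have hpx2 : ∀ q ∈ V, px (px ψ) q = pd vx (pd vx ψ) q := by
    intro q hq
    rw [px_congr hVo hpx1 hq]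
    exact px_eq_pd (dV hψ1s hq)
  have hpx3 : ∀ q ∈ V, px (px (px ψ)) q = pd vx (pd vx (pd vx ψ)) q := by
    intro q hq
    rw [px_congr hVo hpx2 hq]
    exact px_eq_pd (dV hψ2s hq)
  have hpx4 : ∀ q ∈ V, px (px (px (px ψ))) q = pd vx (pd vx (pd vx (pd vx ψ))) q := by
    intro q hq
    rw [px_congr hVo hpx3 hq]
    exact px_eq_pd (dV hψ3s hq)
  have hpx5 : ∀ q ∈ V, px (px (px (px (px ψ)))) q =
      pd vx (pd vx (pd vx (pd vx (pd vx ψ)))) q := by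
    intro q hq
    rw [px_congr hVo hpx4 hq]
    exact px_eq_pd (dV hψ4s hq)
  -- jet values at p
  have hΨ2p : pd vx (pd vx ψ) p = 1 := by
    have h := hjet 2 (by norm_num)
    rw [show (px^[2] ψ) p = px (px ψ) p from rfl, hpx2 p hpV] at h
    simpa using h
  have hΨ3p : pd vx (pd vx (pd vx ψ)) p = 0 := by
    have h := hjet 3 (by norm_num)
    rw [show (px^[3] ψ) p = px (px (px ψ)) p from rfl, hpx3 p hpV] at h
    simpa using h
  have hΨ4p : pd vx (pd vx (pd vx (pd vx ψ))) p = 0 := by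
    have h := hjet 4 (by norm_num)
    rw [show (px^[4] ψ) p = px (px (px (px ψ))) p from rfl, hpx4 p hpV] at h
    simpa using h
  have hΨ5p : pd vx (pd vx (pd vx (pd vx (pd vx ψ)))) p = 0 := by
    have h := hjet 5 (by norm_num)
    rw [show (px^[5] ψ) p = px (px (px (px (px ψ)))) p from rfl, hpx5 p hpV] at h
    simpa using h
  -- the two Lax equations in pd form
  have hE1 : ∀ q ∈ V, pd vy ψ q = -s * (A q * pd vx (pd vx ψ) q) := by
    intro q hq
    have h := heq1 q hq
    rw [hpx2 q hq, py_eq_pd (dV hψ hq)] at h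
    have hAq : A q = ε * ((1 / u q) * (1 / u q)) := by rw [hAdef, hm2def, hDdef]
    rw [hAq]
    have huq := hu0 q (hVU hq)
    field_simp at h ⊢
    linear_combination h
  have hE2 : ∀ q ∈ V, pd vt ψ q = B q * pd vx (pd vx (pd vx ψ)) q
      + C q * pd vx (pd vx ψ) q := by
    intro q hq
    have h := heq2 q hq
    rw [show px^[3] ψ q = px (px (px ψ)) q from rfl, hpx3 q hq, hpx2 q hq,
      pt_eq_pd (dV hψ hq), hpxu q (hVU hq)] at h
    have huq := hu0 q (hVU hq)
    have hc1 : 4 * ε ^ 2 / u q ^ 3 = B q := by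
      rw [hBdef, hm2def, hDdef]; field_simp
    have hc2 : 2 * s * ε * w q / u q ^ 2 - 6 * ε ^ 2 * -(u q ^ 2 * pd vx D q) / u q ^ 4
        = C q := by
      rw [hCdef, hm2def, hDdef]; field_simp; ring
    rw [hc1, hc2] at h
    exact h
  -- derived identities by cross-differentiation
  have hd1 : ∀ q ∈ V, pd vy (pd vx ψ) q =
      -s * (pd vx A q * pd vx (pd vx ψ) q + A q * pd vx (pd vx (pd vx ψ)) q) := by
    intro q hq
    rw [pd_comm hVo hψ hq vy vx, pd_congr hVo hE1 hq vx]
    exact pd_smul_mul (dU hAs (hVU hq)) (dV hψ2s hq) (-s) vx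
  have hd2 : ∀ q ∈ V, pd vy (pd vx (pd vx ψ)) q =
      -s * ((pd vx (pd vx A) q * pd vx (pd vx ψ) q + pd vx A q * pd vx (pd vx (pd vx ψ)) q)
        + (pd vx A q * pd vx (pd vx (pd vx ψ)) q
          + A q * pd vx (pd vx (pd vx (pd vx ψ))) q)) := by
    intro q hq
    rw [pd_comm hVo hψ1s hq vy vx, pd_congr hVo hd1 hq vx]
    exact pd_smul_mul2 (dU hAxs (hVU hq)) (dV hψ2s hq) (dU hAs (hVU hq)) (dV hψ3s hq) (-s) vx
  have hd3p : pd vy (pd vx (pd vx (pd vx ψ))) p =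
      -s * (((pd vx (pd vx (pd vx A)) p * pd vx (pd vx ψ) p
            + pd vx (pd vx A) p * pd vx (pd vx (pd vx ψ)) p)
          + (pd vx (pd vx A) p * pd vx (pd vx (pd vx ψ)) p
            + pd vx A p * pd vx (pd vx (pd vx (pd vx ψ))) p))
        + ((pd vx (pd vx A) p * pd vx (pd vx (pd vx ψ)) p
            + pd vx A p * pd vx (pd vx (pd vx (pd vx ψ))) p)
          + (pd vx A p * pd vx (pd vx (pd vx (pd vx ψ))) p
            + A p * pd vx (pd vx (pd vx (pd vx (pd vx ψ)))) p))) := by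
    rw [pd_comm hVo hψ2s hpV vy vx, pd_congr hVo hd2 hpV vx]
    exact pd_smul_mul4 (dU hAxxs hp) (dV hψ2s hpV) (dU hAxs hp) (dV hψ3s hpV)
      (dU hAxs hp) (dV hψ3s hpV) (dU hAs hp) (dV hψ4s hpV) (-s) vx
  have hd4 : ∀ q ∈ V, pd vt (pd vx ψ) q =
      (pd vx B q * pd vx (pd vx (pd vx ψ)) q + B q * pd vx (pd vx (pd vx (pd vx ψ))) q)
      + (pd vx C q * pd vx (pd vx ψ) q + C q * pd vx (pd vx (pd vx ψ)) q) := by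
    intro q hq
    rw [pd_comm hVo hψ hq vt vx, pd_congr hVo hE2 hq vx]
    exact pd_mul2 (dU hBs (hVU hq)) (dV hψ3s hq) (dU hCs (hVU hq)) (dV hψ2s hq) vx
  have hd5p : pd vt (pd vx (pd vx ψ)) p =
      ((pd vx (pd vx B) p * pd vx (pd vx (pd vx ψ)) p
          + pd vx B p * pd vx (pd vx (pd vx (pd vx ψ))) p)
        + (pd vx B p * pd vx (pd vx (pd vx (pd vx ψ))) p
          + B p * pd vx (pd vx (pd vx (pd vx (pd vx ψ)))) p))
      + ((pd vx (pd vx C) p * pd vx (pd vx ψ) p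
          + pd vx C p * pd vx (pd vx (pd vx ψ)) p)
        + (pd vx C p * pd vx (pd vx (pd vx ψ)) p
          + C p * pd vx (pd vx (pd vx (pd vx ψ))) p)) := by
    rw [pd_comm hVo hψ1s hpV vt vx, pd_congr hVo hd4 hpV vx]
    exact pd_mul4 (dU hBxs hp) (dV hψ3s hpV) (dU hBs hp) (dV hψ4s hpV)
      (dU hCxs hp) (dV hψ2s hpV) (dU hCs hp) (dV hψ3s hpV) vx
  have hd6p : pd vy (pd vt ψ) p =
      (pd vy B p * pd vx (pd vx (pd vx ψ)) p + B p * pd vy (pd vx (pd vx (pd vx ψ))) p)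
      + (pd vy C p * pd vx (pd vx ψ) p + C p * pd vy (pd vx (pd vx ψ)) p) := by
    rw [pd_congr hVo hE2 hpV vy]
    exact pd_mul2 (dU hBs hp) (dV hψ3s hpV) (dU hCs hp) (dV hψ2s hpV) vy
  have hd7p : pd vt (pd vy ψ) p =
      -s * (pd vt A p * pd vx (pd vx ψ) p + A p * pd vt (pd vx (pd vx ψ)) p) := by
    rw [pd_congr hVo hE1 hpV vt]
    exact pd_smul_mul (dU hAs hp) (dV hψ2s hpV) (-s) vt
  -- the compatibility equation
  have hdag := pd_comm hVo hψ hpV vy vt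
  rw [hd6p, hd7p, hd3p, hd2 p hpV, hd5p, hΨ2p, hΨ3p, hΨ4p, hΨ5p, hCyp, hm2yp, hpdyDx,
    hpdxDy, hDyval p hp, hAtp, hm2tp, hCxxp, hAxxxp, hAxx p hp, hAx p hp,
    hm2xxxp, hm2xx p hp, hm2x p hp] at hdag
  have hm2p : m2 p = D p * D p := by rw [hm2def]
  have hAp : A p = ε * m2 p := by rw [hAdef]
  have hBp : B p = 4 * ε ^ 2 * (D p * m2 p) := by rw [hBdef]
  have hCp : C p = 2 * s * ε * (w p * m2 p) + 6 * ε ^ 2 * (m2 p * pd vx D p) := by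
    rw [hCdef]
  rw [hAp, hBp, hCp, hm2p] at hdag
  -- solve for the t-derivative of D
  have hne : 2 * s * ε * D p ≠ 0 := by
    have hDp : D p = 1 / u p := by rw [hDdef]
    have := hu0 p hp
    rw [hDp]
    positivity
  have key : 2 * s * ε * D p * pd vt D p
      = 2 * s * ε * D p * (2 * w p * pd vx w p * (D p)^2 - pd vy w p * D p
        + ε^2 * (D p)^3 * pd vx (pd vx (pd vx D)) p) := by
    linear_combination hdag - (8 * (D p)^3 * pd vx D p * pd vx w p * ε^2
      + 2 * (D p)^4 * pd vx (pd vx w) p * ε^2) * hs3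
  have hdt := mul_left_cancel₀ hne key
  -- convert the goal
  have hpx1D : ∀ q ∈ U, px D q = pd vx D q := fun q hq => px_eq_pd (dU hDs hq)
  have hpx2D : ∀ q ∈ U, px (px D) q = pd vx (pd vx D) q := by
    intro q hq
    rw [px_congr hU hpx1D hq]
    exact px_eq_pd (dU hDxs hq)
  have hpx3D : ∀ q ∈ U, px (px (px D)) q = pd vx (pd vx (pd vx D)) q := by
    intro q hq
    rw [px_congr hU hpx2D hq]
    exact px_eq_pd (dU hDxxs hq)
  rw [pt_eq_pd (dU hu hp), show (px^[3] D) p = px (px (px D)) p from rfl, hpx3D p hp,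
    show py u p = pd vx w p from by rw [py_eq_pd (dU hu hp)]; exact hpdyu p hp,
    show py w p = pd vy w p from py_eq_pd (dU hw hp)]
  have hT := hud vt p hp
  have hDp : D p = 1 / u p := by rw [hDdef]
  have hup := hu0 p hp
  rw [hdt] at hT
  field_simp
  linear_combination (u p)^2 * hT + (-(pd vt u p * u p)
    - 2 * w p * pd vx w p * u p * (u p * D p + 1) + pd vy w p * (u p)^2
    - ε^2 * pd vx (pd vx (pd vx D)) p * ((u p)^2 * (D p)^2 + u p * D p + 1)) * huD p hp
end

section
/- Let ε ≠ 0 be a real constant, U ⊆ ℝ³ an open connected set, and u, w : U → ℝ smooth functions with w_x = u_y on U. Assume that for every point p ∈ U, every N ∈ ℕ, and all real numbers a₀, …, a_N, there exists a smooth function ψ defined on a neighbourhood of p in U which satisfies, at every point of that neighbourhood, both equations ψ_y + uψ_x + ε²ψ_xxx = 0 and ψ_t + 5(u² − w)ψ_x + ε²(15uψ_xxx + 15u_xψ_xx + 10u_xxψ_x) + 9ε⁴ψ_xxxxx = 0, and such that ∂_x^j ψ(p) = a_j for j = 0, …, N. Then u satisfies the BKP equation u_t = 5(u² + w)u_x +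 5u u_y − 5w_y + 5ε²(u u_xxx + u_xxy + u_x u_xx) + ε⁴ u_xxxxx at every point of U. -/
open scoped Topology ContDiff

namespace BKP
abbrev R3 := ℝ × ℝ × ℝ
lemma lineX_hasDerivAt (y t s : ℝ) :
    HasDerivAt (fun s : ℝ => ((s, y, t) : R3)) ((1, 0, 0) : R3) s :=
  (hasDerivAt_id s).prodMk ((hasDerivAt_const s y).prodMk (hasDerivAt_const s t))
lemma lineY_hasDerivAt (x t s : ℝ) :
    HasDerivAt (fun s : ℝ => ((x, s, t) : R3)) ((0, 1, 0) : R3) s :=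
  (hasDerivAt_const s x).prodMk ((hasDerivAt_id s).prodMk (hasDerivAt_const s t))
lemma lineT_hasDerivAt (x y s : ℝ) :
    HasDerivAt (fun s : ℝ => ((x, y, s) : R3)) ((0, 0, 1) : R3) s :=
  (hasDerivAt_const s x).prodMk ((hasDerivAt_const s y).prodMk (hasDerivAt_id s))
lemma px_eq_fderiv {f : R3 → ℝ} {p : R3} (hf : DifferentiableAt ℝ f p) :
    px f p = fderiv ℝ f p (1, 0, 0) :=
  (hf.hasFDerivAt.comp_hasDerivAt p.1 (lineX_hasDerivAt p.2.1 p.2.2 p.1)).deriv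
lemma py_eq_fderiv {f : R3 → ℝ} {p : R3} (hf : DifferentiableAt ℝ f p) :
    py f p = fderiv ℝ f p (0, 1, 0) :=
  (hf.hasFDerivAt.comp_hasDerivAt p.2.1 (lineY_hasDerivAt p.1 p.2.2 p.2.1)).deriv
lemma pt_eq_fderiv {f : R3 → ℝ} {p : R3} (hf : DifferentiableAt ℝ f p) :
    pt f p = fderiv ℝ f p (0, 0, 1) :=
  (hf.hasFDerivAt.comp_hasDerivAt p.2.2 (lineT_hasDerivAt p.1 p.2.1 p.2.2)).deriv

variable {f g : R3 → ℝ} {p : R3} {c : ℝ} {V : Set R3}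


lemma sliceX_diff (hf : DifferentiableAt ℝ f p) :
    DifferentiableAt ℝ (fun s => f (s, p.2.1, p.2.2)) p.1 :=
  hf.comp p.1 (lineX_hasDerivAt p.2.1 p.2.2 p.1).differentiableAt
lemma sliceY_diff (hf : DifferentiableAt ℝ f p) :
    DifferentiableAt ℝ (fun s => f (p.1, s, p.2.2)) p.2.1 :=
  hf.comp p.2.1 (lineY_hasDerivAt p.1 p.2.2 p.2.1).differentiableAt
lemma sliceT_diff (hf : DifferentiableAt ℝ f p) :
    DifferentiableAt ℝ (fun s => f (p.1, p.2.1, s)) p.2.2 :=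
  hf.comp p.2.2 (lineT_hasDerivAt p.1 p.2.1 p.2.2).differentiableAt

lemma px_mul (hf : DifferentiableAt ℝ f p) (hg : DifferentiableAt ℝ g p) :
    px (fun q => f q * g q) p = px f p * g p + f p * px g p :=
  deriv_mul (sliceX_diff hf) (sliceX_diff hg)
lemma py_mul (hf : DifferentiableAt ℝ f p) (hg : DifferentiableAt ℝ g p) :
    py (fun q => f q * g q) p = py f p * g p + f p * py g p :=
  deriv_mul (sliceY_diff hf) (sliceY_diff hg)
lemma pt_mul (hf : DifferentiableAt ℝ f p) (hg : DifferentiableAt ℝ g p) :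
    pt (fun q => f q * g q) p = pt f p * g p + f p * pt g p :=
  deriv_mul (sliceT_diff hf) (sliceT_diff hg)

lemma px_add (hf : DifferentiableAt ℝ f p) (hg : DifferentiableAt ℝ g p) :
    px (fun q => f q + g q) p = px f p + px g p :=
  deriv_add (sliceX_diff hf) (sliceX_diff hg)
lemma py_add (hf : DifferentiableAt ℝ f p) (hg : DifferentiableAt ℝ g p) :
    py (fun q => f q + g q) p = py f p + py g p :=
  deriv_add (sliceY_diff hf) (sliceY_diff hg)
lemma pt_add (hf : DifferentiableAt ℝ f p) (hg : DifferentiableAt ℝ g p) :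
    pt (fun q => f q + g q) p = pt f p + pt g p :=
  deriv_add (sliceT_diff hf) (sliceT_diff hg)

lemma px_sub (hf : DifferentiableAt ℝ f p) (hg : DifferentiableAt ℝ g p) :
    px (fun q => f q - g q) p = px f p - px g p :=
  deriv_sub (sliceX_diff hf) (sliceX_diff hg)
lemma py_sub (hf : DifferentiableAt ℝ f p) (hg : DifferentiableAt ℝ g p) :
    py (fun q => f q - g q) p = py f p - py g p :=
  deriv_sub (sliceY_diff hf) (sliceY_diff hg)
lemma pt_sub (hf : DifferentiableAt ℝ f p) (hg : DifferentiableAt ℝ g p) :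
    pt (fun q => f q - g q) p = pt f p - pt g p :=
  deriv_sub (sliceT_diff hf) (sliceT_diff hg)

lemma px_neg : px (fun q => -f q) p = -px f p := deriv.neg
lemma py_neg : py (fun q => -f q) p = -py f p := deriv.neg
lemma pt_neg : pt (fun q => -f q) p = -pt f p := deriv.neg

lemma px_const_mul (hf : DifferentiableAt ℝ f p) :
    px (fun q => c * f q) p = c * px f p := deriv_const_mul c (sliceX_diff hf)
lemma py_const_mul (hf : DifferentiableAt ℝ f p) :
    py (fun q => c * f q) p = c * py f p := deriv_const_mul c (sliceY_diff hf)
lemma pt_const_mul (hf : DifferentiableAt ℝ f p) :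
    pt (fun q => c * f q) p = c * pt f p := deriv_const_mul c (sliceT_diff hf)



lemma px_congr (hV : IsOpen V) (hp : p ∈ V) (h : ∀ q ∈ V, f q = g q) :
    px f p = px g p := by
  apply Filter.EventuallyEq.deriv_eq
  have hmem : ∀ᶠ s in 𝓝 p.1, ((s, p.2.1, p.2.2) : R3) ∈ V :=
    (lineX_hasDerivAt p.2.1 p.2.2 p.1).continuousAt.eventually_mem (hV.mem_nhds hp)
  filter_upwards [hmem] with s hs using h _ hs

lemma py_congr (hV : IsOpen V) (hp : p ∈ V) (h : ∀ q ∈ V, f q = g q) :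
    py f p = py g p := by
  apply Filter.EventuallyEq.deriv_eq
  have hmem : ∀ᶠ s in 𝓝 p.2.1, ((p.1, s, p.2.2) : R3) ∈ V :=
    (lineY_hasDerivAt p.1 p.2.2 p.2.1).continuousAt.eventually_mem (hV.mem_nhds hp)
  filter_upwards [hmem] with s hs using h _ hs

lemma pt_congr (hV : IsOpen V) (hp : p ∈ V) (h : ∀ q ∈ V, f q = g q) :
    pt f p = pt g p := by
  apply Filter.EventuallyEq.deriv_eq
  have hmem : ∀ᶠ s in 𝓝 p.2.2, ((p.1, p.2.1, s) : R3) ∈ V :=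
    (lineT_hasDerivAt p.1 p.2.1 p.2.2).continuousAt.eventually_mem (hV.mem_nhds hp)
  filter_upwards [hmem] with s hs using h _ hs

lemma diffAt' {F : Type*} [NormedAddCommGroup F] [NormedSpace ℝ F] {f : R3 → F}
    (hV : IsOpen V) (hf : ContDiffOn ℝ ∞ f V) (hp : p ∈ V) :
    DifferentiableAt ℝ f p :=
  (hf.contDiffAt (hV.mem_nhds hp)).differentiableAt (by simp)

lemma diffAt (hV : IsOpen V) (hf : ContDiffOn ℝ ∞ f V) (hp : p ∈ V) :
    DifferentiableAt ℝ f p := diffAt' hV hf hp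

lemma contDiffOn_fderiv_apply (hV : IsOpen V) (hf : ContDiffOn ℝ ∞ f V) (v : R3) :
    ContDiffOn ℝ ∞ (fun q => fderiv ℝ f q v) V :=
  (hf.fderiv_of_isOpen hV (le_of_eq rfl)).clm_apply contDiffOn_const

lemma contDiffOn_px (hV : IsOpen V) (hf : ContDiffOn ℝ ∞ f V) :
    ContDiffOn ℝ ∞ (px f) V :=
  (contDiffOn_fderiv_apply hV hf (1,0,0)).congr fun q hq => px_eq_fderiv (diffAt hV hf hq)
lemma contDiffOn_py (hV : IsOpen V) (hf : ContDiffOn ℝ ∞ f V) :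
    ContDiffOn ℝ ∞ (py f) V :=
  (contDiffOn_fderiv_apply hV hf (0,1,0)).congr fun q hq => py_eq_fderiv (diffAt hV hf hq)
lemma contDiffOn_pt (hV : IsOpen V) (hf : ContDiffOn ℝ ∞ f V) :
    ContDiffOn ℝ ∞ (pt f) V :=
  (contDiffOn_fderiv_apply hV hf (0,0,1)).congr fun q hq => pt_eq_fderiv (diffAt hV hf hq)

lemma contDiffOn_pxk (hV : IsOpen V) (hf : ContDiffOn ℝ ∞ f V) (k : ℕ) :
    ContDiffOn ℝ ∞ (px^[k] f) V := by
  induction k with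
  | zero => exact hf
  | succ k ih => rw [Function.iterate_succ_apply']; exact contDiffOn_px hV ih

-- second derivative symmetry
lemma snd_symm (hV : IsOpen V) (hf : ContDiffOn ℝ ∞ f V) (hp : p ∈ V) (v w : R3) :
    fderiv ℝ (fderiv ℝ f) p v w = fderiv ℝ (fderiv ℝ f) p w v := by
  have h1 : ∀ᶠ q in 𝓝 p, HasFDerivAt f (fderiv ℝ f q) q := by
    filter_upwards [hV.mem_nhds hp] with q hq using (diffAt hV hf hq).hasFDerivAt
  have h2 : DifferentiableAt ℝ (fderiv ℝ f) p :=
    diffAt' hV (hf.fderiv_of_isOpen hV (le_of_eq rfl)) hp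
  exact second_derivative_symmetric_of_eventually h1 h2.hasFDerivAt v w

lemma fderiv_dir_apply (hV : IsOpen V) (hf : ContDiffOn ℝ ∞ f V) (hp : p ∈ V) (v w : R3) :
    fderiv ℝ (fun q => fderiv ℝ f q w) p v = fderiv ℝ (fderiv ℝ f) p v w := by
  have h2 : DifferentiableAt ℝ (fderiv ℝ f) p :=
    diffAt' hV (hf.fderiv_of_isOpen hV (le_of_eq rfl)) hp
  rw [fderiv_clm_apply h2 (differentiableAt_const w)]
  simp

lemma py_px_comm (hV : IsOpen V) (hf : ContDiffOn ℝ ∞ f V) (hp : p ∈ V) :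
    py (px f) p = px (py f) p := by
  have hx : ∀ q ∈ V, px f q = fderiv ℝ f q (1,0,0) := fun q hq => px_eq_fderiv (diffAt hV hf hq)
  have hy : ∀ q ∈ V, py f q = fderiv ℝ f q (0,1,0) := fun q hq => py_eq_fderiv (diffAt hV hf hq)
  rw [py_congr hV hp hx, px_congr hV hp hy,
    py_eq_fderiv (diffAt hV (contDiffOn_fderiv_apply hV hf _) hp),
    px_eq_fderiv (diffAt hV (contDiffOn_fderiv_apply hV hf _) hp),
    fderiv_dir_apply hV hf hp, fderiv_dir_apply hV hf hp]
  exact snd_symm hV hf hp _ _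

lemma pt_px_comm (hV : IsOpen V) (hf : ContDiffOn ℝ ∞ f V) (hp : p ∈ V) :
    pt (px f) p = px (pt f) p := by
  have hx : ∀ q ∈ V, px f q = fderiv ℝ f q (1,0,0) := fun q hq => px_eq_fderiv (diffAt hV hf hq)
  have ht : ∀ q ∈ V, pt f q = fderiv ℝ f q (0,0,1) := fun q hq => pt_eq_fderiv (diffAt hV hf hq)
  rw [pt_congr hV hp hx, px_congr hV hp ht,
    pt_eq_fderiv (diffAt hV (contDiffOn_fderiv_apply hV hf _) hp),
    px_eq_fderiv (diffAt hV (contDiffOn_fderiv_apply hV hf _) hp),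
    fderiv_dir_apply hV hf hp, fderiv_dir_apply hV hf hp]
  exact snd_symm hV hf hp _ _

lemma pt_py_comm (hV : IsOpen V) (hf : ContDiffOn ℝ ∞ f V) (hp : p ∈ V) :
    pt (py f) p = py (pt f) p := by
  have hy : ∀ q ∈ V, py f q = fderiv ℝ f q (0,1,0) := fun q hq => py_eq_fderiv (diffAt hV hf hq)
  have ht : ∀ q ∈ V, pt f q = fderiv ℝ f q (0,0,1) := fun q hq => pt_eq_fderiv (diffAt hV hf hq)
  rw [pt_congr hV hp hy, py_congr hV hp ht,
    pt_eq_fderiv (diffAt hV (contDiffOn_fderiv_apply hV hf _) hp),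
    py_eq_fderiv (diffAt hV (contDiffOn_fderiv_apply hV hf _) hp),
    fderiv_dir_apply hV hf hp, fderiv_dir_apply hV hf hp]
  exact snd_symm hV hf hp _ _

lemma py_pxk_comm (hV : IsOpen V) (hf : ContDiffOn ℝ ∞ f V) (k : ℕ) :
    ∀ q ∈ V, py (px^[k] f) q = px^[k] (py f) q := by
  induction k with
  | zero => intro q hq; rfl
  | succ k ih =>
    intro q hq
    rw [Function.iterate_succ_apply', py_px_comm hV (contDiffOn_pxk hV hf k) hq,
      px_congr hV hq ih, Function.iterate_succ_apply' px k]

lemma pt_pxk_comm (hV : IsOpen V) (hf : ContDiffOn ℝ ∞ f V) (k : ℕ) :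
    ∀ q ∈ V, pt (px^[k] f) q = px^[k] (pt f) q := by
  induction k with
  | zero => intro q hq; rfl
  | succ k ih =>
    intro q hq
    rw [Function.iterate_succ_apply', pt_px_comm hV (contDiffOn_pxk hV hf k) hq,
      px_congr hV hq ih, Function.iterate_succ_apply' px k]


lemma pxk_congr (hV : IsOpen V) (k : ℕ) (h : ∀ q ∈ V, f q = g q) :
    ∀ q ∈ V, px^[k] f q = px^[k] g q := by
  induction k with
  | zero => exact h
  | succ k ih =>
    intro q hq
    rw [Function.iterate_succ_apply', Function.iterate_succ_apply']
    exact px_congr hV hq ih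

lemma pxk_add (hV : IsOpen V) (k : ℕ) :
    ∀ f g : R3 → ℝ, ContDiffOn ℝ ∞ f V → ContDiffOn ℝ ∞ g V → ∀ q ∈ V,
      px^[k] (fun x => f x + g x) q = px^[k] f q + px^[k] g q := by
  induction k with
  | zero => intro f g _ _ q _; rfl
  | succ k ih =>
    intro f g hf hg q hq
    have h1 : ∀ r ∈ V, px (fun x => f x + g x) r = (fun x => px f x + px g x) r :=
      fun r hr => px_add (diffAt hV hf hr) (diffAt hV hg hr)
    rw [Function.iterate_succ_apply, pxk_congr hV k h1 q hq,
      ih _ _ (contDiffOn_px hV hf) (contDiffOn_px hV hg) q hq,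
      ← Function.iterate_succ_apply px k f, ← Function.iterate_succ_apply px k g]

lemma pxk_const_mul (hV : IsOpen V) (k : ℕ) {c : ℝ} :
    ∀ f : R3 → ℝ, ContDiffOn ℝ ∞ f V → ∀ q ∈ V,
      px^[k] (fun x => c * f x) q = c * px^[k] f q := by
  induction k with
  | zero => intro f _ q _; rfl
  | succ k ih =>
    intro f hf q hq
    have h1 : ∀ r ∈ V, px (fun x => c * f x) r = (fun x => c * px f x) r :=
      fun r hr => px_const_mul (diffAt hV hf hr)
    rw [Function.iterate_succ_apply, pxk_congr hV k h1 q hq,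
      ih _ (contDiffOn_px hV hf) q hq, ← Function.iterate_succ_apply px k f]

lemma pxk_neg (hV : IsOpen V) (k : ℕ) (hf : ContDiffOn ℝ ∞ f V) :
    ∀ q ∈ V, px^[k] (fun x => -f x) q = -px^[k] f q := by
  intro q hq
  have h1 : ∀ r ∈ V, (fun x => -f x) r = (fun x => (-1 : ℝ) * f x) r := by
    intro r _; simp
  rw [pxk_congr hV k h1 q hq, pxk_const_mul hV k f hf q hq]; ring

lemma pxk_mul (hV : IsOpen V) (k : ℕ) :
    ∀ f g : R3 → ℝ, ContDiffOn ℝ ∞ f V → ContDiffOn ℝ ∞ g V → ∀ q ∈ V,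
      px^[k] (fun x => f x * g x) q
        = ∑ i ∈ Finset.range (k + 1), (k.choose i : ℝ) * (px^[i] f q * px^[k - i] g q) := by
  induction k with
  | zero => intro f g _ _ q _; simp
  | succ k ih =>
    intro f g hf hg q hq
    have h1 : ∀ r ∈ V, px (fun x => f x * g x) r
        = (fun x => px f x * g x + f x * px g x) r :=
      fun r hr => px_mul (diffAt hV hf hr) (diffAt hV hg hr)
    rw [Function.iterate_succ_apply, pxk_congr hV k h1 q hq,
      pxk_add hV k _ _ ((contDiffOn_px hV hf).mul hg) (hf.mul (contDiffOn_px hV hg)) q hq,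
      ih _ _ (contDiffOn_px hV hf) hg q hq, ih _ _ hf (contDiffOn_px hV hg) q hq]
    -- now pure algebra on sums
    have e1 : ∀ i : ℕ, px^[i] (px f) q = px^[i+1] f q := fun i =>
      congrFun (Function.iterate_succ_apply px i f).symm q
    have e2 : ∀ i : ℕ, px^[i] (px g) q = px^[i+1] g q := fun i =>
      congrFun (Function.iterate_succ_apply px i g).symm q
    simp only [e1, e2]
    -- goal: ∑_{i≤k} C(k,i) f_{i+1} g_{k-i} + ∑_{i≤k} C(k,i) f_i g_{k-i+1}
    --     = ∑_{i≤k+1} C(k+1,i) f_i g_{k+1-i}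
    rw [Finset.sum_range_succ' (fun i => ((k+1).choose i : ℝ) * (px^[i] f q * px^[k+1-i] g q)) (k+1)]
    have h2 : ∀ i ∈ Finset.range (k+1),
        ((k+1).choose (i+1) : ℝ) * (px^[i+1] f q * px^[k+1-(i+1)] g q)
          = (k.choose i : ℝ) * (px^[i+1] f q * px^[k-i] g q)
            + (k.choose (i+1) : ℝ) * (px^[i+1] f q * px^[k-(i+1)+1] g q) := by
      intro i hi
      rw [Finset.mem_range] at hi
      have hcs : (k+1).choose (i+1) = k.choose i + k.choose (i+1) := Nat.choose_succ_succ k i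
      have hs1 : k + 1 - (i + 1) = k - i := by omega
      have hs2 : k - (i+1) + 1 = k - i ∨ (i = k ∧ k.choose (i+1) = 0) := by
        rcases Nat.lt_or_ge i k with h | h
        · left; omega
        · right; have : i = k := by omega
          exact ⟨this, by rw [this]; exact Nat.choose_succ_self k⟩
      rcases hs2 with h | ⟨hik, hz⟩
      · rw [hcs, hs1, h]; push_cast; ring
      · rw [hcs, hs1, hz, hik]; push_cast; simp
    rw [Finset.sum_congr rfl h2, Finset.sum_add_distrib]
    have h3 : ∑ i ∈ Finset.range (k+1), (k.choose (i+1) : ℝ) * (px^[i+1] f q * px^[k-(i+1)+1] g q)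
        = ∑ i ∈ Finset.range (k+1), (k.choose i : ℝ) * (px^[i] f q * px^[k-i+1] g q)
          - (k.choose 0 : ℝ) * (px^[0] f q * px^[k-0+1] g q) := by
      rw [Finset.sum_range_succ' (fun i => (k.choose i : ℝ) * (px^[i] f q * px^[k-i+1] g q)) k]
      have : (k.choose (k+1) : ℝ) * (px^[k+1] f q * px^[k-(k+1)+1] g q) = 0 := by
        simp [Nat.choose_succ_self]
      rw [Finset.sum_range_succ]
      simp only [this]
      ring
    rw [h3]
    simp only [Nat.choose_zero_right, Nat.cast_one, Function.iterate_zero_apply,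
      Nat.sub_zero, Nat.choose_self]
    ring


end BKP

open scoped ContDiff
open BKP

noncomputable def AA (ε : ℝ) (u ψ : BKP.R3 → ℝ) : BKP.R3 → ℝ :=
  fun q => u q * px^[1] ψ q + ε ^ 2 * px^[3] ψ q

noncomputable def CC (ε : ℝ) (u w : BKP.R3 → ℝ) : BKP.R3 → ℝ :=
  fun q => 5 * (u q * u q) + ((-5) * w q + 10 * ε ^ 2 * px^[2] u q)

noncomputable def BB (ε : ℝ) (u w ψ : BKP.R3 → ℝ) : BKP.R3 → ℝ :=
  fun q => CC ε u w q * px^[1] ψ q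
    + (15 * ε ^ 2 * (u q * px^[3] ψ q)
      + (15 * ε ^ 2 * (px^[1] u q * px^[2] ψ q) + 9 * ε ^ 4 * px^[5] ψ q))


/-- Compatibility of the Lax pair ψ_y + uψ_x + ε²ψ_xxx = 0,
ψ_t + 5(u² − w)ψ_x + ε²(15uψ_xxx + 15u_xψ_xx + 10u_xxψ_x) + 9ε⁴ψ_xxxxx = 0 forces
the BKP equation u_t = 5(u² + w)u_x + 5uu_y − 5w_y + 5ε²(uu_xxx + u_xxy + u_xu_xx)
+ ε⁴u_xxxxx. -/
theorem statement15
    (ε : ℝ) (hε : ε ≠ 0)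
    (U : Set (ℝ × ℝ × ℝ)) (hU : IsOpen U) (hUconn : IsConnected U)
    (u w : ℝ × ℝ × ℝ → ℝ)
    (hu : ContDiffOn ℝ (⊤ : ℕ∞) u U) (hw : ContDiffOn ℝ (⊤ : ℕ∞) w U)
    (hwx : ∀ p ∈ U, px w p = py u p)
    (hLax : ∀ p ∈ U, ∀ N : ℕ, ∀ a : ℕ → ℝ,
      ∃ V : Set (ℝ × ℝ × ℝ), IsOpen V ∧ p ∈ V ∧ V ⊆ U ∧
        ∃ ψ : ℝ × ℝ × ℝ → ℝ, ContDiffOn ℝ (⊤ : ℕ∞) ψ V ∧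
          (∀ q ∈ V, py ψ q + u q * px ψ q + ε ^ 2 * (px^[3] ψ) q = 0) ∧
          (∀ q ∈ V, pt ψ q + 5 * ((u q) ^ 2 - w q) * px ψ q
            + ε ^ 2 * (15 * u q * (px^[3] ψ) q + 15 * px u q * px (px ψ) q
              + 10 * px (px u) q * px ψ q)
            + 9 * ε ^ 4 * (px^[5] ψ) q = 0) ∧
          (∀ j ≤ N, (px^[j] ψ) p = a j)) :
    ∀ p ∈ U, pt u p = 5 * ((u p) ^ 2 + w p) * px u p + 5 * u p * py u p - 5 * py w p
      + 5 * ε ^ 2 * (u p * (px^[3] u) p + py (px (px u)) p + px u p * px (px u) p)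
      + ε ^ 4 * (px^[5] u) p := by
  intro p hp
  have hu' : ContDiffOn ℝ ∞ u U := hu.of_le (by simp)
  have hw' : ContDiffOn ℝ ∞ w U := hw.of_le (by simp)
  obtain ⟨V, hV, hpV, hVU, ψ, hψ', hE1, hE2, hjet⟩ :=
    hLax p hp 8 (fun j => if j = 1 then (1 : ℝ) else 0)
  have hψ : ContDiffOn ℝ ∞ ψ V := hψ'.of_le (by simp)
  have huV : ContDiffOn ℝ ∞ u V := hu'.mono hVU
  have hwV : ContDiffOn ℝ ∞ w V := hw'.mono hVU
  have hψk : ∀ m, ContDiffOn ℝ ∞ (px^[m] ψ) V := contDiffOn_pxk hV hψ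
  have huk : ∀ m, ContDiffOn ℝ ∞ (px^[m] u) V := contDiffOn_pxk hV huV
  -- iterate bookkeeping
  have i1ψ : px^[1] ψ = px ψ := congrFun (Function.iterate_one px) ψ
  have i1u : px^[1] u = px u := congrFun (Function.iterate_one px) u
  have i1w : px^[1] w = px w := congrFun (Function.iterate_one px) w
  have i2ψ : px^[2] ψ = px (px ψ) := by
    rw [Function.iterate_succ_apply px 1 ψ]
    exact congrFun (Function.iterate_one px) (px ψ)
  have i2u : px^[2] u = px (px u) := by
    rw [Function.iterate_succ_apply px 1 u]
    exact congrFun (Function.iterate_one px) (px u)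
  -- jet values
  have hpsi1 : px^[1] ψ p = 1 := by rw [hjet 1 (by norm_num)]; norm_num
  have hpsi0 : ∀ m, 2 ≤ m → m ≤ 8 → px^[m] ψ p = 0 := by
    intro m h2 h8; rw [hjet m h8, if_neg (by omega)]
  -- key sum evaluations
  have hsum1 : ∀ (f : R3 → ℝ) (k : ℕ), k ≤ 7 →
      ∑ i ∈ Finset.range (k + 1), (k.choose i : ℝ)
        * (px^[i] f p * px^[k - i] (px^[1] ψ) p) = px^[k] f p := by
    intro f k hk
    have key : ∀ i ∈ Finset.range (k + 1), (k.choose i : ℝ)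
        * (px^[i] f p * px^[k - i] (px^[1] ψ) p)
          = if i = k then px^[k] f p else 0 := by
      intro i hi; rw [Finset.mem_range] at hi
      have hit : px^[k - i] (px^[1] ψ) p = px^[k - i + 1] ψ p :=
        congrFun (Function.iterate_add_apply px (k - i) 1 ψ).symm p
      by_cases h : i = k
      · rw [if_pos h, h]
        have h0 : px^[k - k] (px^[1] ψ) p = px^[1] ψ p := by rw [Nat.sub_self]; simp
        rw [h0, hpsi1, Nat.choose_self]
        push_cast; ring
      · rw [if_neg h, hit, hpsi0 (k - i + 1) (by omega) (by omega)]; ring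
    rw [Finset.sum_congr rfl key,
      Finset.sum_ite_eq' (Finset.range (k + 1)) k (fun _ => px^[k] f p),
      if_pos (Finset.mem_range.2 (by omega))]
  have hsum0 : ∀ (f : R3 → ℝ) (k m : ℕ), 2 ≤ m → k + m ≤ 8 →
      ∑ i ∈ Finset.range (k + 1), (k.choose i : ℝ)
        * (px^[i] f p * px^[k - i] (px^[m] ψ) p) = 0 := by
    intro f k m h2 h8
    apply Finset.sum_eq_zero
    intro i hi; rw [Finset.mem_range] at hi
    have hit : px^[k - i] (px^[m] ψ) p = px^[k - i + m] ψ p :=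
      congrFun (Function.iterate_add_apply px (k - i) m ψ).symm p
    rw [hit, hpsi0 (k - i + m) (by omega) (by omega)]; ring
  -- the PDE right-hand sides
  have hA' : ∀ q ∈ V, py ψ q = -(AA ε u ψ q) := by
    intro q hq
    have h := hE1 q hq
    simp only [AA, i1ψ]
    linarith
  have hB' : ∀ q ∈ V, pt ψ q = -(BB ε u w ψ q) := by
    intro q hq
    have h := hE2 q hq
    simp only [BB, CC, i1ψ, i2ψ, i1u, i2u]
    linear_combination h
  -- x-derivatives of the right-hand sides at p
  have hpxkA : ∀ k, 1 ≤ k → k ≤ 5 → px^[k] (fun q => -(AA ε u ψ q)) p = -(px^[k] u p) := by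
    intro k h1 h5
    have e0 : px^[k] (fun q => -(AA ε u ψ q)) p = -(px^[k] (AA ε u ψ) p) :=
      pxk_neg hV k ((huV.mul (hψk 1)).add (contDiffOn_const.mul (hψk 3))) p hpV
    have e1 : px^[k] (AA ε u ψ) p = px^[k] (fun q => u q * px^[1] ψ q) p
        + px^[k] (fun q => ε ^ 2 * px^[3] ψ q) p :=
      pxk_add hV k _ _ (huV.mul (hψk 1)) (contDiffOn_const.mul (hψk 3)) p hpV
    have e2 := pxk_mul hV k u (px^[1] ψ) huV (hψk 1) p hpV
    have e3 : px^[k] (fun q => ε ^ 2 * px^[3] ψ q) p = ε ^ 2 * px^[k] (px^[3] ψ) p :=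
      pxk_const_mul hV k (px^[3] ψ) (hψk 3) p hpV
    have e4 : px^[k] (px^[3] ψ) p = px^[k + 3] ψ p :=
      congrFun (Function.iterate_add_apply px k 3 ψ).symm p
    rw [e0, e1, e2, e3, e4, hsum1 u k (by omega), hpsi0 (k + 3) (by omega) (by omega)]
    ring
  have hpxkB : ∀ k, 1 ≤ k → k ≤ 3 → px^[k] (fun q => -(BB ε u w ψ q)) p
      = -(px^[k] (CC ε u w) p) := by
    intro k h1 h3
    have hCCsm : ContDiffOn ℝ ∞ (CC ε u w) V :=
      (contDiffOn_const.mul (huV.mul huV)).add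
        ((contDiffOn_const.mul hwV).add (contDiffOn_const.mul (huk 2)))
    have sm2 : ContDiffOn ℝ ∞ (fun q => 15 * ε ^ 2 * (u q * px^[3] ψ q)) V :=
      contDiffOn_const.mul (huV.mul (hψk 3))
    have sm3 : ContDiffOn ℝ ∞ (fun q => 15 * ε ^ 2 * (px^[1] u q * px^[2] ψ q)) V :=
      contDiffOn_const.mul ((huk 1).mul (hψk 2))
    have sm4 : ContDiffOn ℝ ∞ (fun q => 9 * ε ^ 4 * px^[5] ψ q) V :=
      contDiffOn_const.mul (hψk 5)
    have e0 : px^[k] (fun q => -(BB ε u w ψ q)) p = -(px^[k] (BB ε u w ψ) p) :=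
      pxk_neg hV k ((hCCsm.mul (hψk 1)).add (sm2.add (sm3.add sm4))) p hpV
    have e1 : px^[k] (BB ε u w ψ) p
        = px^[k] (fun q => CC ε u w q * px^[1] ψ q) p
          + px^[k] (fun q => 15 * ε ^ 2 * (u q * px^[3] ψ q)
            + (15 * ε ^ 2 * (px^[1] u q * px^[2] ψ q) + 9 * ε ^ 4 * px^[5] ψ q)) p :=
      pxk_add hV k _ _ (hCCsm.mul (hψk 1)) (sm2.add (sm3.add sm4)) p hpV
    have e2 : px^[k] (fun q => 15 * ε ^ 2 * (u q * px^[3] ψ q)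
          + (15 * ε ^ 2 * (px^[1] u q * px^[2] ψ q) + 9 * ε ^ 4 * px^[5] ψ q)) p
        = px^[k] (fun q => 15 * ε ^ 2 * (u q * px^[3] ψ q)) p
          + px^[k] (fun q => 15 * ε ^ 2 * (px^[1] u q * px^[2] ψ q)
            + 9 * ε ^ 4 * px^[5] ψ q) p :=
      pxk_add hV k _ _ sm2 (sm3.add sm4) p hpV
    have e3 : px^[k] (fun q => 15 * ε ^ 2 * (px^[1] u q * px^[2] ψ q)
          + 9 * ε ^ 4 * px^[5] ψ q) p
        = px^[k] (fun q => 15 * ε ^ 2 * (px^[1] u q * px^[2] ψ q)) p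
          + px^[k] (fun q => 9 * ε ^ 4 * px^[5] ψ q) p :=
      pxk_add hV k _ _ sm3 sm4 p hpV
    have f1 := pxk_mul hV k (CC ε u w) (px^[1] ψ) hCCsm (hψk 1) p hpV
    have f2 : px^[k] (fun q => 15 * ε ^ 2 * (u q * px^[3] ψ q)) p
        = 15 * ε ^ 2 * px^[k] (fun q => u q * px^[3] ψ q) p :=
      pxk_const_mul hV k _ (huV.mul (hψk 3)) p hpV
    have f2' := pxk_mul hV k u (px^[3] ψ) huV (hψk 3) p hpV
    have f3 : px^[k] (fun q => 15 * ε ^ 2 * (px^[1] u q * px^[2] ψ q)) p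
        = 15 * ε ^ 2 * px^[k] (fun q => px^[1] u q * px^[2] ψ q) p :=
      pxk_const_mul hV k _ ((huk 1).mul (hψk 2)) p hpV
    have f3' := pxk_mul hV k (px^[1] u) (px^[2] ψ) (huk 1) (hψk 2) p hpV
    have f4 : px^[k] (fun q => 9 * ε ^ 4 * px^[5] ψ q) p
        = 9 * ε ^ 4 * px^[k] (px^[5] ψ) p :=
      pxk_const_mul hV k _ (hψk 5) p hpV
    have f4' : px^[k] (px^[5] ψ) p = px^[k + 5] ψ p :=
      congrFun (Function.iterate_add_apply px k 5 ψ).symm p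
    rw [e0, e1, e2, e3, f1, f2, f2', f3, f3', f4, f4',
      hsum1 (CC ε u w) k (by omega), hsum0 u k 3 (by omega) (by omega),
      hsum0 (px^[1] u) k 2 (by omega) (by omega), hpsi0 (k + 5) (by omega) (by omega)]
    ring
  -- derivatives of CC at p
  have hCck : ∀ k, k + 2 ≤ 7 → px^[k] (CC ε u w) p
      = 5 * (∑ i ∈ Finset.range (k + 1), (k.choose i : ℝ) * (px^[i] u p * px^[k - i] u p))
        + ((-5) * px^[k] w p + 10 * ε ^ 2 * px^[k + 2] u p) := by
    intro k hk
    have e1 : px^[k] (CC ε u w) p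
        = px^[k] (fun q => 5 * (u q * u q)) p
          + px^[k] (fun q => (-5) * w q + 10 * ε ^ 2 * px^[2] u q) p :=
      pxk_add hV k _ _ (contDiffOn_const.mul (huV.mul huV))
        ((contDiffOn_const.mul hwV).add (contDiffOn_const.mul (huk 2))) p hpV
    have e2 : px^[k] (fun q => (-5) * w q + 10 * ε ^ 2 * px^[2] u q) p
        = px^[k] (fun q => (-5) * w q) p + px^[k] (fun q => 10 * ε ^ 2 * px^[2] u q) p :=
      pxk_add hV k _ _ (contDiffOn_const.mul hwV) (contDiffOn_const.mul (huk 2)) p hpV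
    have e3 : px^[k] (fun q => 5 * (u q * u q)) p = 5 * px^[k] (fun q => u q * u q) p :=
      pxk_const_mul hV k _ (huV.mul huV) p hpV
    have e4 := pxk_mul hV k u u huV huV p hpV
    have e5 : px^[k] (fun q => (-5) * w q) p = (-5) * px^[k] w p :=
      pxk_const_mul hV k _ hwV p hpV
    have e6 : px^[k] (fun q => 10 * ε ^ 2 * px^[2] u q) p
        = 10 * ε ^ 2 * px^[k] (px^[2] u) p :=
      pxk_const_mul hV k _ (huk 2) p hpV
    have e7 : px^[k] (px^[2] u) p = px^[k + 2] u p :=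
      congrFun (Function.iterate_add_apply px k 2 u).symm p
    rw [e1, e2, e3, e4, e5, e6, e7]
  have hCc1 : px^[1] (CC ε u w) p
      = 5 * (px^[1] u p * u p + u p * px^[1] u p)
        + ((-5) * px^[1] w p + 10 * ε ^ 2 * px^[3] u p) := by
    rw [hCck 1 (by norm_num)]
    norm_num [Finset.sum_range_succ]
    ring
  have hCc3 : px^[3] (CC ε u w) p
      = 5 * (2 * (u p * px^[3] u p) + 6 * (px^[1] u p * px^[2] u p))
        + ((-5) * px^[3] w p + 10 * ε ^ 2 * px^[5] u p) := by
    rw [hCck 3 (by norm_num)]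
    norm_num [Finset.sum_range_succ]
    ring
  -- mixed second derivatives of ψ
  have hptψ : ∀ k, 1 ≤ k → k ≤ 3 → pt (px^[k] ψ) p = -(px^[k] (CC ε u w) p) := by
    intro k h1 h3
    rw [pt_pxk_comm hV hψ k p hpV, pxk_congr hV k hB' p hpV]
    exact hpxkB k h1 h3
  have hpyψ : ∀ k, 1 ≤ k → k ≤ 5 → py (px^[k] ψ) p = -(px^[k] u p) := by
    intro k h1 h5
    rw [py_pxk_comm hV hψ k p hpV, pxk_congr hV k hA' p hpV]
    exact hpxkA k h1 h5
  -- Route 1 : pt (py ψ) at p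
  have hR1 : pt (py ψ) p
      = -(pt u p * 1 + u p * (-(px^[1] (CC ε u w) p))
          + ε ^ 2 * (-(px^[3] (CC ε u w) p))) := by
    rw [pt_congr hV hpV hA', pt_neg]
    congr 1
    have h1 : pt (AA ε u ψ) p = pt (fun q => u q * px^[1] ψ q) p
        + pt (fun q => ε ^ 2 * px^[3] ψ q) p := by
      rw [show AA ε u ψ = fun q => (u q * px^[1] ψ q) + ε ^ 2 * px^[3] ψ q from rfl]
      exact pt_add (diffAt hV (huV.mul (hψk 1)) hpV)
        (diffAt hV (contDiffOn_const.mul (hψk 3)) hpV)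
    rw [h1, pt_mul (diffAt hV huV hpV) (diffAt hV (hψk 1) hpV),
      pt_const_mul (diffAt hV (hψk 3) hpV), hptψ 1 (by norm_num) (by norm_num),
      hptψ 3 (by norm_num) (by norm_num), hpsi1]
  -- Route 2 : py (pt ψ) at p
  have hpyCC : py (CC ε u w) p
      = 5 * (py u p * u p + u p * py u p)
        + ((-5) * py w p + 10 * ε ^ 2 * py (px^[2] u) p) := by
    rw [show CC ε u w = fun q => (5 * (u q * u q)) + ((-5) * w q + 10 * ε ^ 2 * px^[2] u q)
        from rfl]
    rw [py_add (diffAt hV (contDiffOn_const.mul (huV.mul huV)) hpV)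
        (diffAt hV ((contDiffOn_const.mul hwV).add (contDiffOn_const.mul (huk 2))) hpV),
      py_const_mul (diffAt hV (huV.mul huV) hpV),
      py_mul (diffAt hV huV hpV) (diffAt hV huV hpV),
      py_add (diffAt hV (contDiffOn_const.mul hwV) hpV)
        (diffAt hV (contDiffOn_const.mul (huk 2)) hpV),
      py_const_mul (diffAt hV hwV hpV), py_const_mul (diffAt hV (huk 2) hpV)]
  have hCCsm : ContDiffOn ℝ ∞ (CC ε u w) V :=
    (contDiffOn_const.mul (huV.mul huV)).add
      ((contDiffOn_const.mul hwV).add (contDiffOn_const.mul (huk 2)))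
  have hR2 : py (pt ψ) p
      = -((py (CC ε u w) p * 1 + CC ε u w p * (-(px^[1] u p)))
          + (15 * ε ^ 2 * (py u p * 0 + u p * (-(px^[3] u p)))
            + (15 * ε ^ 2 * (py (px^[1] u) p * 0 + px^[1] u p * (-(px^[2] u p)))
              + 9 * ε ^ 4 * (-(px^[5] u p))))) := by
    rw [py_congr hV hpV hB', py_neg]
    congr 1
    rw [show BB ε u w ψ = fun q => (CC ε u w q * px^[1] ψ q)
        + (15 * ε ^ 2 * (u q * px^[3] ψ q)
          + (15 * ε ^ 2 * (px^[1] u q * px^[2] ψ q) + 9 * ε ^ 4 * px^[5] ψ q)) from rfl]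
    rw [py_add (diffAt hV (hCCsm.mul (hψk 1)) hpV)
        (diffAt hV ((contDiffOn_const.mul (huV.mul (hψk 3))).add
          ((contDiffOn_const.mul ((huk 1).mul (hψk 2))).add
            (contDiffOn_const.mul (hψk 5)))) hpV),
      py_mul (diffAt hV hCCsm hpV) (diffAt hV (hψk 1) hpV),
      py_add (diffAt hV (contDiffOn_const.mul (huV.mul (hψk 3))) hpV)
        (diffAt hV ((contDiffOn_const.mul ((huk 1).mul (hψk 2))).add
          (contDiffOn_const.mul (hψk 5))) hpV),
      py_const_mul (diffAt hV (huV.mul (hψk 3)) hpV),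
      py_mul (diffAt hV huV hpV) (diffAt hV (hψk 3) hpV),
      py_add (diffAt hV (contDiffOn_const.mul ((huk 1).mul (hψk 2))) hpV)
        (diffAt hV (contDiffOn_const.mul (hψk 5)) hpV),
      py_const_mul (diffAt hV ((huk 1).mul (hψk 2)) hpV),
      py_mul (diffAt hV (huk 1) hpV) (diffAt hV (hψk 2) hpV),
      py_const_mul (diffAt hV (hψk 5) hpV),
      hpyψ 1 (by norm_num) (by norm_num), hpyψ 2 (by norm_num) (by norm_num),
      hpyψ 3 (by norm_num) (by norm_num), hpyψ 5 (by norm_num) (by norm_num),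
      hpsi1, hpsi0 2 (by norm_num) (by norm_num), hpsi0 3 (by norm_num) (by norm_num)]
  -- compatibility
  have Heq : pt (py ψ) p = py (pt ψ) p := pt_py_comm hV hψ hpV
  rw [hR1, hR2, hCc1, hCc3, hpyCC] at Heq
  -- w derivative identities
  have hw1 : px^[1] w p = py u p := by rw [i1w]; exact hwx p hp
  have hw3 : px^[3] w p = py (px (px u)) p := by
    have h1 : px^[3] w p = px^[2] (px w) p := congrFun (Function.iterate_succ_apply px 2 w) p
    have h2 : px^[2] (px w) p = px^[2] (py u) p := pxk_congr hU 2 hwx p hp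
    have h3 : py (px^[2] u) p = px^[2] (py u) p := py_pxk_comm hU hu' 2 p hp
    rw [h1, h2, ← h3, i2u]
  rw [hw1, hw3, i1u, i2u] at Heq
  have hCCp : CC ε u w p = 5 * (u p * u p) + ((-5) * w p + 10 * ε ^ 2 * px (px u) p) := by
    rw [show CC ε u w p = 5 * (u p * u p) + ((-5) * w p + 10 * ε ^ 2 * px^[2] u p) from rfl, i2u]
  rw [hCCp] at Heq
  linear_combination -Heq
end
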